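/- arXiv:1803.09631 — 3 statements merged into one kernel-verified Lean document; each statement's English description precedes it below -/
import Mathlib

section
/- The incidence matrix of a simple connected directed graph with girth g satisfies the nullspace property of order s if and only if s < g/2; moreover the nullspace constant max_{|S|≤s} max_{η ∈ nullspace(A) ∩ B₁} ‖η_S‖₁ equals min{s/g, 1}. -/
open Finset

/-- ℓ⁰ "norm": the number of nonzero entries of a vector. -/
noncomputable def l0 {k : ℕ} (x : Fin k → ℝ) : ℕ :=
  (Finset.univ.filter (fun i => x i ≠ 0)).card

/-- ℓ¹ norm of a vector. -/
noncomputable def l1 {k : ℕ} (x : Fin k → ℝ) : ℝ := ∑ i, |x i|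

/-- The spark of a matrix: the smallest number of linearly dependent columns
(`⊤` if the columns are linearly independent). -/
noncomputable def spark {m n : ℕ} (Φ : Matrix (Fin m) (Fin n) ℝ) : ℕ∞ :=
  sInf {k : ℕ∞ | ∃ η : Fin n → ℝ, η ≠ 0 ∧ Φ.mulVec η = 0 ∧ k = (l0 η : ℕ∞)}

/-- A simple directed graph on `m` vertices with `n` edges: no self loops and at
most one edge between any two vertices. -/
structure DiGraph (m n : ℕ) where
  src : Fin n → Fin m
  tgt : Fin n → Fin m
  loopless : ∀ j, src j ≠ tgt j
  simple : ∀ j k : Fin n, ({src j, tgt j} : Finset (Fin m)) = {src k, tgt k} → j = k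

/-- The incidence matrix of a directed graph. -/
noncomputable def inc {m n : ℕ} (G : DiGraph m n) : Matrix (Fin m) (Fin n) ℝ :=
  fun i j => if G.tgt j = i then 1 else if G.src j = i then -1 else 0

/-- The underlying undirected simple graph. -/
def toSG {m n : ℕ} (G : DiGraph m n) : SimpleGraph (Fin m) where
  Adj u v := u ≠ v ∧ ∃ j, (G.src j = u ∧ G.tgt j = v) ∨ (G.src j = v ∧ G.tgt j = u)
  symm := ⟨fun u v h => ⟨h.1.symm, h.2.elim fun j hj => ⟨j, hj.symm⟩⟩⟩
  loopless := ⟨fun u h => h.1 rfl⟩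

/-- `u 0, u 1, …, u (r-1), u 0` is a simple cycle of length `r` in the underlying
undirected graph of `G`. -/
def IsSimpleCycle {m n : ℕ} (G : DiGraph m n) (r : ℕ) (u : ℕ → Fin m) : Prop :=
  3 ≤ r ∧ (∀ i < r, ∀ j < r, u i = u j → i = j) ∧
    ∀ i < r, ∃ j, (G.src j = u i ∧ G.tgt j = u ((i + 1) % r)) ∨
      (G.src j = u ((i + 1) % r) ∧ G.tgt j = u i)

/-- The signed indicator vector `w(C)` of a simple cycle. -/
noncomputable def cycVec {m n : ℕ} (G : DiGraph m n) (r : ℕ) (u : ℕ → Fin m) : Fin n → ℝ :=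
  fun j => ∑ i ∈ Finset.range r,
    ((if G.src j = u i ∧ G.tgt j = u ((i + 1) % r) then (1 : ℝ) else 0) -
     (if G.src j = u ((i + 1) % r) ∧ G.tgt j = u i then (1 : ℝ) else 0))

/-- The girth of (the underlying undirected graph of) `G`: the length of the
shortest simple cycle, `⊤` if `G` is acyclic. -/
noncomputable def dgirth {m n : ℕ} (G : DiGraph m n) : ℕ∞ :=
  sInf {r : ℕ∞ | ∃ (k : ℕ) (u : ℕ → Fin m), IsSimpleCycle G k u ∧ r = (k : ℕ∞)}

/-- The set of normalized simple cycle vectors `w(C)/‖w(C)‖₁`. -/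
noncomputable def W1 {m n : ℕ} (G : DiGraph m n) : Set (Fin n → ℝ) :=
  {z | ∃ r u, IsSimpleCycle G r u ∧ z = (l1 (cycVec G r u))⁻¹ • cycVec G r u}

namespace NSPaux

variable {m n : ℕ} (G : DiGraph m n)

lemma edge_unique {j k : Fin n}
    (h : (G.src j = G.src k ∧ G.tgt j = G.tgt k) ∨ (G.src j = G.tgt k ∧ G.tgt j = G.src k)) :
    j = k := by
  apply G.simple
  rcases h with ⟨h1, h2⟩ | ⟨h1, h2⟩
  · rw [h1, h2]
  · rw [h1, h2, Finset.pair_comm]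

/-- `η` pushes flow from `a` to `b` along some edge. -/
def FlowStep (η : Fin n → ℝ) (a b : Fin m) : Prop :=
  ∃ e, (G.src e = a ∧ G.tgt e = b ∧ 0 < η e) ∨ (G.src e = b ∧ G.tgt e = a ∧ η e < 0)

lemma flow_cons {η : Fin n → ℝ} (hη : (inc G).mulVec η = 0) (v : Fin m)
    (hin : ∃ a, FlowStep G η a v) : ∃ b, FlowStep G η v b := by
  classical
  set In : Finset (Fin n) :=
    Finset.univ.filter (fun e => (G.tgt e = v ∧ 0 < η e) ∨ (G.src e = v ∧ η e < 0)) with hIn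
  set Out : Finset (Fin n) :=
    Finset.univ.filter (fun e => (G.src e = v ∧ 0 < η e) ∨ (G.tgt e = v ∧ η e < 0)) with hOut
  have hconv : ∑ e ∈ In, |η e| = ∑ e ∈ Out, |η e| := by
    have h0 : ∑ e, inc G v e * η e = 0 := by
      have := congrFun hη v
      simpa [Matrix.mulVec, dotProduct] using this
    have : ∑ e ∈ In, |η e| - ∑ e ∈ Out, |η e| = ∑ e, inc G v e * η e := by
      rw [Finset.sum_filter, Finset.sum_filter, ← Finset.sum_sub_distrib]
      apply Finset.sum_congr rfl
      intro e _
      have hne := G.loopless e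
      rcases lt_trichotomy (η e) 0 with hlt | heq | hgt
      · by_cases ht : G.tgt e = v <;> by_cases hs : G.src e = v <;>
          simp [inc, ht, hs, hlt, not_lt.2 hlt.le, abs_of_neg hlt] <;> first
          | (exact absurd (hs.trans ht.symm) hne) | ring
      · simp [heq]
      · by_cases ht : G.tgt e = v <;> by_cases hs : G.src e = v <;>
          simp [inc, ht, hs, hgt, not_lt.2 hgt.le, abs_of_pos hgt] <;> first
          | (exact absurd (hs.trans ht.symm) hne) | ring
    linarith [this, h0]
  have hpos : 0 < ∑ e ∈ In, |η e| := by
    obtain ⟨a, e, he⟩ := hin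
    have heIn : e ∈ In ∧ η e ≠ 0 := by
      rcases he with ⟨h1, h2, h3⟩ | ⟨h1, h2, h3⟩
      · exact ⟨by simp [hIn, h2, h3], ne_of_gt h3⟩
      · exact ⟨by simp [hIn, h1, h3], ne_of_lt h3⟩
    apply Finset.sum_pos' (fun i _ => abs_nonneg _) ⟨e, heIn.1, abs_pos.2 heIn.2⟩
  rw [hconv] at hpos
  have : Out.Nonempty := by
    by_contra h
    rw [Finset.not_nonempty_iff_eq_empty] at h
    simp [h] at hpos
  obtain ⟨e, he⟩ := this
  rw [hOut, Finset.mem_filter] at he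
  rcases he.2 with ⟨h1, h2⟩ | ⟨h1, h2⟩
  · exact ⟨G.tgt e, e, Or.inl ⟨h1, rfl, h2⟩⟩
  · exact ⟨G.src e, e, Or.inr ⟨rfl, h1, h2⟩⟩


lemma mod_succ_lt {r i : ℕ} (hr : 0 < r) : (i + 1) % r < r := Nat.mod_lt _ hr

lemma exists_flow_cycle {η : Fin n → ℝ} (hη : (inc G).mulVec η = 0) {e0 : Fin n}
    (he0 : η e0 ≠ 0) :
    ∃ (r : ℕ) (u : ℕ → Fin m), 3 ≤ r ∧ (∀ i < r, ∀ j < r, u i = u j → i = j) ∧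
      ∀ i < r, FlowStep G η (u i) (u ((i + 1) % r)) := by
  classical
  -- starting vertex: the head of the flow along e0
  set v0 : Fin m := if 0 < η e0 then G.tgt e0 else G.src e0 with hv0
  have hin0 : ∃ a, FlowStep G η a v0 := by
    rcases lt_or_gt_of_ne he0 with hlt | hgt
    · exact ⟨G.tgt e0, e0, Or.inr ⟨by simp [hv0, not_lt.2 hlt.le], rfl, hlt⟩⟩
    · exact ⟨G.src e0, e0, Or.inl ⟨rfl, by simp [hv0, hgt], hgt⟩⟩
  -- the walk
  let f : ℕ → Fin m := fun k => Nat.rec v0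
    (fun _ prev => if h : ∃ b, FlowStep G η prev b then h.choose else prev) k
  have hstep : ∀ k, (∃ a, FlowStep G η a (f k)) ∧ FlowStep G η (f k) (f (k + 1)) := by
    intro k
    induction k with
    | zero =>
      refine ⟨hin0, ?_⟩
      have h := flow_cons G hη v0 hin0
      show FlowStep G η v0 (if h' : ∃ b, FlowStep G η v0 b then h'.choose else v0)
      rw [dif_pos h]
      exact h.choose_spec
    | succ k ih =>
      have hin : ∃ a, FlowStep G η a (f (k + 1)) := ⟨f k, ih.2⟩
      refine ⟨hin, ?_⟩
      have h := flow_cons G hη _ hin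
      show FlowStep G η (f (k+1)) (if h' : ∃ b, FlowStep G η (f (k+1)) b then h'.choose else f (k+1))
      rw [dif_pos h]
      exact h.choose_spec
  -- pigeonhole
  obtain ⟨a0, b0', hne, heq⟩ := Finite.exists_ne_map_eq_of_infinite f
  have hex : ∃ b, ∃ a < b, f a = f b := by
    rcases hne.lt_or_gt with h | h
    · exact ⟨b0', a0, h, heq⟩
    · exact ⟨a0, b0', h, heq.symm⟩
  set b0 := sInf {b : ℕ | ∃ a < b, f a = f b} with hb0
  have hmin : ∀ x, (∃ c < x, f c = f x) → b0 ≤ x := fun x hx => Nat.sInf_le hx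
  have hmem : b0 ∈ {b : ℕ | ∃ a < b, f a = f b} := hb0 ▸ Nat.sInf_mem hex
  obtain ⟨a, ha, hfa⟩ := hmem
  set r := b0 - a with hr
  have hr0 : 0 < r := by omega
  refine ⟨r, fun i => f (a + i % r), ?_, ?_, ?_⟩
  · -- 3 ≤ r
    by_contra hlt
    push_neg at hlt
    interval_cases r
    · -- r = 1 : loop
      have h1 : f (a + 1) = f a := by rw [show a + 1 = b0 by omega, hfa]
      obtain ⟨e, he⟩ := (hstep a).2
      rw [h1] at he
      rcases he with ⟨h1, h2, _⟩ | ⟨h1, h2, _⟩ <;> exact G.loopless e (h1.trans h2.symm)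
    · -- r = 2 : two edges between a pair
      have h2 : f (a + 2) = f a := by rw [show a + 2 = b0 by omega, hfa]
      have hne12 : f a ≠ f (a + 1) := by
        intro h
        have := hmin (a + 1) ⟨a, by omega, h⟩
        omega
      obtain ⟨e1, he1⟩ := (hstep a).2
      obtain ⟨e2, he2⟩ := (hstep (a + 1)).2
      rw [h2] at he2
      have he12 : e1 = e2 := by
        apply edge_unique G
        rcases he1 with ⟨p1, p2, _⟩ | ⟨p1, p2, _⟩ <;> rcases he2 with ⟨q1, q2, _⟩ | ⟨q1, q2, _⟩
        · exact Or.inr ⟨p1.trans q2.symm, p2.trans q1.symm⟩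
        · exact Or.inl ⟨p1.trans q1.symm, p2.trans q2.symm⟩
        · exact Or.inl ⟨p1.trans q1.symm, p2.trans q2.symm⟩
        · exact Or.inr ⟨p1.trans q2.symm, p2.trans q1.symm⟩
      subst he12
      rcases he1 with ⟨p1, p2, p3⟩ | ⟨p1, p2, p3⟩ <;>
        rcases he2 with ⟨q1, q2, q3⟩ | ⟨q1, q2, q3⟩
      · exact hne12 (p1.symm.trans q1)
      · exact absurd p3 (not_lt.2 q3.le)
      · exact absurd p3 (not_lt.2 q3.le)
      · exact hne12 (p2.symm.trans q2)
  · -- injectivity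
    intro i hi j hj hij
    simp only [Nat.mod_eq_of_lt hi, Nat.mod_eq_of_lt hj] at hij
    by_contra hne'
    rcases Nat.lt_or_ge i j with h | h
    · have := hmin (a + j) ⟨a + i, by omega, hij⟩
      omega
    · have hlt : j < i := by omega
      have := hmin (a + i) ⟨a + j, by omega, hij.symm⟩
      omega
  · -- steps
    intro i hi
    show FlowStep G η (f (a + i % r)) (f (a + (i + 1) % r % r))
    rw [Nat.mod_eq_of_lt (Nat.mod_lt _ hr0), Nat.mod_eq_of_lt hi]
    by_cases h : i + 1 < r
    · rw [Nat.mod_eq_of_lt h]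
      exact (hstep (a + i)).2
    · have : (i + 1) % r = 0 := by
        rw [show i + 1 = r by omega, Nat.mod_self]
      rw [this]
      have h2 : f (a + 0) = f (a + i + 1) := by
        rw [Nat.add_zero, hfa, show a + i + 1 = b0 by omega]
      rw [h2]
      exact (hstep (a + i)).2

/-- Edge `e` realizes step `i` of the cycle `u` (in either direction). -/
def IsStep (G : DiGraph m n) (r : ℕ) (u : ℕ → Fin m) (i : ℕ) (e : Fin n) : Prop :=
  (G.src e = u i ∧ G.tgt e = u ((i + 1) % r)) ∨ (G.src e = u ((i + 1) % r) ∧ G.tgt e = u i)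

section Cyc

variable {r : ℕ} {u : ℕ → Fin m}

lemma pairs_ne (hr : 3 ≤ r) {i j : ℕ} (hi : i < r) (hj : j < r)
    (h1 : i = (j + 1) % r) (h2 : j = (i + 1) % r) : False := by
  have e1 : (j + 1) % r = if j + 1 = r then 0 else j + 1 := by
    split_ifs with h
    · rw [h, Nat.mod_self]
    · exact Nat.mod_eq_of_lt (by omega)
  have e2 : (i + 1) % r = if i + 1 = r then 0 else i + 1 := by
    split_ifs with h
    · rw [h, Nat.mod_self]
    · exact Nat.mod_eq_of_lt (by omega)
  rw [e1] at h1; rw [e2] at h2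
  split_ifs at h1 h2 <;> omega

lemma succ_mod_ne (hr : 3 ≤ r) {i : ℕ} (hi : i < r) : (i + 1) % r ≠ i := by
  have e2 : (i + 1) % r = if i + 1 = r then 0 else i + 1 := by
    split_ifs with h
    · rw [h, Nat.mod_self]
    · exact Nat.mod_eq_of_lt (by omega)
  rw [e2]; split_ifs <;> omega

variable (hr : 3 ≤ r) (hinj : ∀ i < r, ∀ j < r, u i = u j → i = j)

include hr hinj in
lemma step_idx_unique {i j : ℕ} (hi : i < r) (hj : j < r) {e : Fin n}
    (hsi : IsStep G r u i e) (hsj : IsStep G r u j e) : i = j := by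
  have hi1 : (i + 1) % r < r := Nat.mod_lt _ (by omega)
  have hj1 : (j + 1) % r < r := Nat.mod_lt _ (by omega)
  rcases hsi with ⟨p1, p2⟩ | ⟨p1, p2⟩ <;> rcases hsj with ⟨q1, q2⟩ | ⟨q1, q2⟩
  · exact hinj i hi j hj (p1.symm.trans q1)
  · exact (pairs_ne hr hi hj
      (hinj i hi _ hj1 (p1.symm.trans q1)) (hinj j hj _ hi1 (q2.symm.trans p2))).elim
  · exact (pairs_ne hr hj hi
      (hinj j hj _ hi1 (q1.symm.trans p1)) (hinj i hi _ hj1 (p2.symm.trans q2))).elim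
  · exact hinj i hi j hj (p2.symm.trans q2)

lemma step_edge_eq {i : ℕ} {e e' : Fin n}
    (hs : IsStep G r u i e) (hs' : IsStep G r u i e') : e = e' := by
  apply edge_unique G
  rcases hs with ⟨p1, p2⟩ | ⟨p1, p2⟩ <;> rcases hs' with ⟨q1, q2⟩ | ⟨q1, q2⟩
  · exact Or.inl ⟨p1.trans q1.symm, p2.trans q2.symm⟩
  · exact Or.inr ⟨p1.trans q2.symm, p2.trans q1.symm⟩
  · exact Or.inr ⟨p1.trans q2.symm, p2.trans q1.symm⟩
  · exact Or.inl ⟨p1.trans q1.symm, p2.trans q2.symm⟩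

lemma cycVec_eq_zero {e : Fin n} (h : ∀ i < r, ¬ IsStep G r u i e) :
    cycVec G r u e = 0 := by
  apply Finset.sum_eq_zero
  intro i hi
  rw [Finset.mem_range] at hi
  have := h i hi
  rw [IsStep, not_or] at this
  rw [if_neg this.1, if_neg this.2, sub_zero]

include hr hinj in
lemma cycVec_step {i : ℕ} (hi : i < r) {e : Fin n} (hs : IsStep G r u i e) :
    cycVec G r u e = if G.src e = u i then 1 else -1 := by
  have hi1 : (i + 1) % r < r := Nat.mod_lt _ (by omega)
  have hne : u ((i + 1) % r) ≠ u i := fun h =>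
    succ_mod_ne hr hi (hinj _ hi1 i hi h)
  rw [cycVec, Finset.sum_eq_single_of_mem i (Finset.mem_range.2 hi)]
  · rcases hs with ⟨p1, p2⟩ | ⟨p1, p2⟩
    · rw [if_pos ⟨p1, p2⟩, if_neg, if_pos p1, sub_zero]
      rintro ⟨q1, q2⟩
      exact hne (p1.symm.trans q1).symm
    · rw [if_neg, if_pos ⟨p1, p2⟩, if_neg, zero_sub]
      · intro hsrc
        exact hne (hsrc.symm.trans p1).symm
      · rintro ⟨q1, q2⟩
        exact hne (p2.symm.trans q2).symm
  · intro j hj hji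
    rw [Finset.mem_range] at hj
    have hnot : ¬ IsStep G r u j e := fun hsj =>
      hji (step_idx_unique G hr hinj hj hi hsj hs)
    rw [IsStep, not_or] at hnot
    rw [if_neg hnot.1, if_neg hnot.2, sub_zero]

include hr hinj in
lemma cycVec_step_ne {i : ℕ} (hi : i < r) {e : Fin n} (hs : IsStep G r u i e) :
    cycVec G r u e ≠ 0 := by
  rw [cycVec_step G hr hinj hi hs]
  split_ifs <;> norm_num

include hr hinj in
lemma cycVec_ne_iff {e : Fin n} :
    cycVec G r u e ≠ 0 ↔ ∃ i < r, IsStep G r u i e := by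
  constructor
  · intro h
    by_contra hc
    push_neg at hc
    exact h (cycVec_eq_zero G (fun i hi => hc i hi))
  · rintro ⟨i, hi, hs⟩
    exact cycVec_step_ne G hr hinj hi hs

variable (hC : ∀ i < r, ∃ e, IsStep G r u i e)

include hr hinj hC in
lemma card_support :
    (Finset.univ.filter fun e => cycVec G r u e ≠ 0).card = r := by
  classical
  have key := Finset.card_bij (s := Finset.range r)
    (t := Finset.univ.filter fun e => cycVec G r u e ≠ 0)
    (fun i hi => (hC i (Finset.mem_range.1 hi)).choose) ?_ ?_ ?_
  · rw [Finset.card_range] at key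
    exact key.symm
  · intro i hi
    rw [Finset.mem_filter]
    exact ⟨Finset.mem_univ _,
      cycVec_step_ne G hr hinj (Finset.mem_range.1 hi) (hC i (Finset.mem_range.1 hi)).choose_spec⟩
  · intro i hi j hj hij
    exact step_idx_unique G hr hinj (Finset.mem_range.1 hi) (Finset.mem_range.1 hj)
      ((hC i (Finset.mem_range.1 hi)).choose_spec)
      (hij ▸ (hC j (Finset.mem_range.1 hj)).choose_spec)
  · intro e he
    rw [Finset.mem_filter] at he
    obtain ⟨i, hi, hs⟩ := (cycVec_ne_iff G hr hinj).1 he.2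
    exact ⟨i, Finset.mem_range.2 hi,
      step_edge_eq G ((hC i hi).choose_spec) hs⟩

include hr hinj hC in
lemma l1_cycVec : l1 (cycVec G r u) = r := by
  classical
  rw [l1]
  have : ∀ e, |cycVec G r u e| = if cycVec G r u e ≠ 0 then (1 : ℝ) else 0 := by
    intro e
    by_cases hz : cycVec G r u e = 0
    · simp [hz]
    · obtain ⟨i, hi, hs⟩ := (cycVec_ne_iff G hr hinj).1 hz
      rw [if_pos hz, cycVec_step G hr hinj hi hs]
      split_ifs <;> norm_num
  rw [Finset.sum_congr rfl (fun e _ => this e), Finset.sum_boole,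
    Finset.filter_congr (fun e _ => Iff.rfl)]
  rw [card_support G hr hinj hC]

include hr hinj hC in
lemma mulVec_cycVec : (inc G).mulVec (cycVec G r u) = 0 := by
  classical
  funext v
  show ∑ e, inc G v e * cycVec G r u e = 0
  have hswap : ∑ e, inc G v e * cycVec G r u e
      = ∑ i ∈ Finset.range r, ∑ e, inc G v e *
        ((if G.src e = u i ∧ G.tgt e = u ((i + 1) % r) then (1 : ℝ) else 0) -
         (if G.src e = u ((i + 1) % r) ∧ G.tgt e = u i then (1 : ℝ) else 0)) := by
    simp only [cycVec, Finset.mul_sum]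
    rw [Finset.sum_comm]
  rw [hswap]
  have hinner : ∀ i < r, ∑ e, inc G v e *
        ((if G.src e = u i ∧ G.tgt e = u ((i + 1) % r) then (1 : ℝ) else 0) -
         (if G.src e = u ((i + 1) % r) ∧ G.tgt e = u i then (1 : ℝ) else 0))
      = (if u ((i + 1) % r) = v then (1 : ℝ) else 0) - (if u i = v then (1 : ℝ) else 0) := by
    intro i hi
    have hi1 : (i + 1) % r < r := Nat.mod_lt _ (by omega)
    have hne : u ((i + 1) % r) ≠ u i := fun h =>
      succ_mod_ne hr hi (hinj _ hi1 i hi h)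
    set ei := (hC i hi).choose with hei
    have hsi : IsStep G r u i ei := (hC i hi).choose_spec
    rw [Finset.sum_eq_single_of_mem ei (Finset.mem_univ _)]
    · rcases hsi with ⟨p1, p2⟩ | ⟨p1, p2⟩
      · rw [if_pos ⟨p1, p2⟩, if_neg (fun h => hne (p1.symm.trans h.1).symm), sub_zero,
          mul_one, inc, p1, p2]
        by_cases h1 : u ((i + 1) % r) = v <;> by_cases h2 : u i = v <;>
          simp [h1, h2]
        exact hne (h1.trans h2.symm)
      · rw [if_neg (fun h => hne (p2.symm.trans h.2).symm), if_pos ⟨p1, p2⟩, zero_sub,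
          mul_neg, mul_one, inc, p1, p2]
        by_cases h1 : u ((i + 1) % r) = v <;> by_cases h2 : u i = v <;>
          simp [h1, h2]
        exact hne (h1.trans h2.symm)
    · intro e _ hei'
      have hnot : ¬ IsStep G r u i e := fun hs =>
        hei' (step_edge_eq G hs hsi)
      rw [IsStep, not_or] at hnot
      rw [if_neg hnot.1, if_neg hnot.2, sub_zero, mul_zero]
  rw [Finset.sum_congr rfl (fun i hhi => hinner i (Finset.mem_range.1 hhi)),
    Finset.sum_sub_distrib]
  have hre : ∑ i ∈ Finset.range r, (if u ((i + 1) % r) = v then (1 : ℝ) else 0)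
      = ∑ i ∈ Finset.range r, (if u i = v then (1 : ℝ) else 0) := by
    apply Finset.sum_nbij' (i := fun x => (x + 1) % r) (j := fun x => (x + (r - 1)) % r)
    · intro a ha
      exact Finset.mem_range.2 (Nat.mod_lt _ (by omega))
    · intro a ha
      exact Finset.mem_range.2 (Nat.mod_lt _ (by omega))
    · intro a ha
      rw [Nat.mod_add_mod, show a + 1 + (r - 1) = a + r by omega, Nat.add_mod_right,
        Nat.mod_eq_of_lt (Finset.mem_range.1 ha)]
    · intro a ha
      rw [Nat.mod_add_mod, show a + (r - 1) + 1 = a + r by omega, Nat.add_mod_right,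
        Nat.mod_eq_of_lt (Finset.mem_range.1 ha)]
    · intro a ha
      rfl
  rw [hre, sub_self]

end Cyc

lemma girth_facts {g : ℕ} (hg : dgirth G = (g : ℕ∞)) :
    (∃ u, IsSimpleCycle G g u) ∧ ∀ k u', IsSimpleCycle G k u' → g ≤ k := by
  classical
  have hTne : {r : ℕ∞ | ∃ (k : ℕ) (u : ℕ → Fin m), IsSimpleCycle G k u ∧ r = (k : ℕ∞)}.Nonempty := by
    by_contra h
    rw [Set.not_nonempty_iff_eq_empty] at h
    rw [dgirth, h, sInf_empty] at hg
    exact (ENat.coe_ne_top g) hg.symm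
  obtain ⟨x, k0, u0, hcyc0, hx⟩ := hTne
  have hMne : {k : ℕ | ∃ u, IsSimpleCycle G k u}.Nonempty := ⟨k0, u0, hcyc0⟩
  have hmem : sInf {k : ℕ | ∃ u, IsSimpleCycle G k u} ∈ {k : ℕ | ∃ u, IsSimpleCycle G k u} :=
    Nat.sInf_mem hMne
  have hkey : dgirth G = ((sInf {k : ℕ | ∃ u, IsSimpleCycle G k u} : ℕ) : ℕ∞) := by
    rw [dgirth]
    apply le_antisymm
    · apply sInf_le
      rw [Set.mem_setOf_eq]
      exact ⟨_, hmem.choose, hmem.choose_spec, rfl⟩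
    · apply le_sInf
      rintro y ⟨k, u, hc, rfl⟩
      have : sInf {k : ℕ | ∃ u, IsSimpleCycle G k u} ≤ k :=
        Nat.sInf_le (show k ∈ {k : ℕ | ∃ u, IsSimpleCycle G k u} from ⟨u, hc⟩)
      exact_mod_cast this
  have hgk : g = sInf {k : ℕ | ∃ u, IsSimpleCycle G k u} := by
    have := hg.symm.trans hkey
    exact_mod_cast this
  constructor
  · rw [hgk]; exact hmem
  · intro k u' hc
    rw [hgk]
    exact Nat.sInf_le ⟨u', hc⟩


lemma l1_nonneg (η : Fin n → ℝ) : 0 ≤ l1 η :=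
  Finset.sum_nonneg (fun i _ => abs_nonneg _)

lemma key_bound {g : ℕ} (hgirth : ∀ k u', IsSimpleCycle G k u' → g ≤ k) :
    ∀ η : Fin n → ℝ, (inc G).mulVec η = 0 → ∀ e, (g : ℝ) * |η e| ≤ l1 η := by
  classical
  suffices H : ∀ N (η : Fin n → ℝ), l0 η ≤ N → (inc G).mulVec η = 0 →
      ∀ e, (g : ℝ) * |η e| ≤ l1 η by
    intro η hη e
    exact H (l0 η) η le_rfl hη e
  intro N
  induction N with
  | zero =>
    intro η h0 hη e
    have hz : η e = 0 := by
      by_contra h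
      have hmem : e ∈ Finset.univ.filter (fun i => η i ≠ 0) :=
        Finset.mem_filter.2 ⟨Finset.mem_univ _, h⟩
      have := Finset.card_pos.2 ⟨e, hmem⟩
      rw [l0] at h0
      omega
    rw [hz, abs_zero, mul_zero]
    exact l1_nonneg η
  | succ N ih =>
    intro η h0 hη e
    by_cases hze : η e = 0
    · rw [hze, abs_zero, mul_zero]
      exact l1_nonneg η
    obtain ⟨r, u, hr, hinj, hflow⟩ := exists_flow_cycle G hη hze
    have hC : ∀ i < r, ∃ e', IsStep G r u i e' := by
      intro i hi
      obtain ⟨e', he'⟩ := hflow i hi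
      rcases he' with ⟨a, b, _⟩ | ⟨a, b, _⟩
      · exact ⟨e', Or.inl ⟨a, b⟩⟩
      · exact ⟨e', Or.inr ⟨a, b⟩⟩
    have hcyc : IsSimpleCycle G r u := ⟨hr, hinj, fun i hi => by
      obtain ⟨e', he'⟩ := hC i hi
      rcases he' with ⟨a, b⟩ | ⟨a, b⟩
      · exact ⟨e', Or.inl ⟨a, b⟩⟩
      · exact ⟨e', Or.inr ⟨a, b⟩⟩⟩
    have hgr : (g : ℝ) ≤ (r : ℝ) := by exact_mod_cast hgirth r u hcyc
    set w := cycVec G r u with hw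
    -- alignment of w with η
    have halign : ∀ e', w e' ≠ 0 → (w e' = 1 ∧ 0 < η e') ∨ (w e' = -1 ∧ η e' < 0) := by
      intro e' hne'
      obtain ⟨i, hi, hs⟩ := (cycVec_ne_iff G hr hinj).1 hne'
      have hi1 : (i + 1) % r < r := Nat.mod_lt _ (by omega)
      have hneu : u ((i + 1) % r) ≠ u i := fun h =>
        succ_mod_ne hr hi (hinj _ hi1 i hi h)
      obtain ⟨e'', he''⟩ := hflow i hi
      have he2 : e'' = e' := by
        apply step_edge_eq G (i := i) _ hs
        rcases he'' with ⟨a, b, _⟩ | ⟨a, b, _⟩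
        · exact Or.inl ⟨a, b⟩
        · exact Or.inr ⟨a, b⟩
      rw [he2] at he''
      rcases he'' with ⟨a, b, hpos⟩ | ⟨a, b, hneg⟩
      · left
        refine ⟨?_, hpos⟩
        rw [hw, cycVec_step G hr hinj hi hs, if_pos a]
      · right
        refine ⟨?_, hneg⟩
        rw [hw, cycVec_step G hr hinj hi hs, if_neg]
        intro h
        exact hneu (h.symm.trans a).symm
    have habs1 : ∀ e', w e' ≠ 0 → |w e'| = 1 := by
      intro e' h
      rcases halign e' h with ⟨h1, _⟩ | ⟨h1, _⟩ <;> rw [h1] <;> norm_num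
    -- support of w
    set C := Finset.univ.filter (fun e' => w e' ≠ 0) with hCdef
    have hCcard : C.card = r := card_support G hr hinj hC
    have hCne : C.Nonempty := Finset.card_pos.1 (by rw [hCcard]; omega)
    set ε := C.inf' hCne (fun e' => |η e'|) with hε
    have hεpos : 0 < ε := by
      rw [hε, Finset.lt_inf'_iff]
      intro e' he'
      rw [hCdef, Finset.mem_filter] at he'
      rcases halign e' he'.2 with ⟨_, h2⟩ | ⟨_, h2⟩
      · exact abs_pos.2 (ne_of_gt h2)
      · exact abs_pos.2 (ne_of_lt h2)
    have hεle : ∀ e' ∈ C, ε ≤ |η e'| := fun e' h => Finset.inf'_le _ h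
    obtain ⟨estar, hestar, hεeq⟩ := Finset.exists_mem_eq_inf' hCne (fun e' => |η e'|)
    -- the reduced vector
    set η' : Fin n → ℝ := fun e' => η e' - ε * w e' with hη'
    have habs : ∀ e', |η' e'| = |η e'| - ε * |w e'| := by
      intro e'
      show |η e' - ε * w e'| = |η e'| - ε * |w e'|
      by_cases hz : w e' = 0
      · rw [hz]
        simp
      · have hle := hεle e' (Finset.mem_filter.2 ⟨Finset.mem_univ _, hz⟩)
        rcases halign e' hz with ⟨h1, h2⟩ | ⟨h1, h2⟩
        · rw [h1, abs_one, mul_one]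
          rw [abs_of_pos h2] at hle
          rw [abs_of_nonneg (by linarith : (0:ℝ) ≤ η e' - ε), abs_of_pos h2]
        · rw [h1]
          rw [abs_of_neg h2] at hle
          rw [show |(-1 : ℝ)| = 1 by norm_num, mul_one, mul_neg_one, sub_neg_eq_add]
          rw [abs_of_nonpos (by linarith : η e' + ε ≤ 0), abs_of_neg h2]
          ring
    -- η' is in the nullspace
    have hη'null : (inc G).mulVec η' = 0 := by
      funext v
      have h1 : ∑ e', inc G v e' * η e' = 0 := by
        have := congrFun hη v
        simpa [Matrix.mulVec, dotProduct] using this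
      have h2 : ∑ e', inc G v e' * w e' = 0 := by
        have := congrFun (mulVec_cycVec G hr hinj hC) v
        simpa [Matrix.mulVec, dotProduct, hw] using this
      show ∑ e', inc G v e' * η' e' = 0
      have : ∀ e', inc G v e' * η' e' = inc G v e' * η e' - ε * (inc G v e' * w e') := by
        intro e'
        show inc G v e' * (η e' - ε * w e') = inc G v e' * η e' - ε * (inc G v e' * w e')
        ring
      rw [Finset.sum_congr rfl (fun e' _ => this e'), Finset.sum_sub_distrib,
        ← Finset.mul_sum, h1, h2, mul_zero, sub_zero]
    -- l1 identity
    have hl1w : l1 w = r := l1_cycVec G hr hinj hC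
    have hl1 : l1 η' = l1 η - ε * r := by
      rw [l1, Finset.sum_congr rfl (fun e' _ => habs e'), Finset.sum_sub_distrib,
        ← Finset.mul_sum]
      rw [l1, ← l1, ← l1, hl1w]
    -- support decreases
    have hsupp : l0 η' ≤ N := by
      have hsub : Finset.univ.filter (fun i => η' i ≠ 0) ⊂
          Finset.univ.filter (fun i => η i ≠ 0) := by
        constructor
        · intro e'' he''
          rw [Finset.mem_filter] at he'' ⊢
          refine ⟨Finset.mem_univ _, ?_⟩
          intro hz
          apply he''.2
          have hwz : w e'' = 0 := by
            by_contra hwnz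
            rcases halign e'' hwnz with ⟨_, h2⟩ | ⟨_, h2⟩ <;>
              simp [hz] at h2
          show η e'' - ε * w e'' = 0
          rw [hz, hwz, mul_zero, sub_zero]
        · intro hsub'
          have hstar1 : estar ∈ Finset.univ.filter (fun i => η i ≠ 0) := by
            rw [Finset.mem_filter]
            rw [hCdef, Finset.mem_filter] at hestar
            refine ⟨Finset.mem_univ _, ?_⟩
            intro hz
            rcases halign estar hestar.2 with ⟨_, h2⟩ | ⟨_, h2⟩ <;> simp [hz] at h2
          have hstar2 : estar ∈ Finset.univ.filter (fun i => η' i ≠ 0) := hsub' hstar1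
          rw [Finset.mem_filter] at hstar2
          apply hstar2.2
          have hwstar : w estar ≠ 0 := by
            rw [hCdef, Finset.mem_filter] at hestar
            exact hestar.2
          have : |η' estar| = 0 := by
            rw [habs, habs1 estar hwstar, mul_one, hε, hεeq, sub_self]
          exact abs_eq_zero.1 this
      have := Finset.card_lt_card hsub
      rw [l0] at h0 ⊢
      omega
    have IH := ih η' hsupp hη'null e
    have hwle : |w e| ≤ 1 := by
      by_cases hz : w e = 0
      · rw [hz, abs_zero]; norm_num
      · rw [habs1 e hz]
    have habse := habs e
    have hg0 : (0:ℝ) ≤ g := Nat.cast_nonneg g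
    have key1 : (g:ℝ) * |η e| = (g:ℝ) * |η' e| + ((g:ℝ) * ε) * |w e| := by
      rw [habse]; ring
    have h2 : ((g:ℝ) * ε) * |w e| ≤ ((g:ℝ) * ε) * 1 :=
      mul_le_mul_of_nonneg_left hwle (mul_nonneg hg0 hεpos.le)
    have h3 : (g:ℝ) * ε ≤ (r:ℝ) * ε := mul_le_mul_of_nonneg_right hgr hεpos.le
    linarith [IH, hl1, key1, h2, h3]


lemma cycVec_abs {r : ℕ} {u : ℕ → Fin m} (hr : 3 ≤ r)
    (hinj : ∀ i < r, ∀ j < r, u i = u j → i = j) {e : Fin n}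
    (h : cycVec G r u e ≠ 0) : |cycVec G r u e| = 1 := by
  obtain ⟨i, hi, hs⟩ := (cycVec_ne_iff G hr hinj).1 h
  rw [cycVec_step G hr hinj hi hs]
  split_ifs <;> norm_num

end NSPaux

open NSPaux in
theorem stmt15 {m n : ℕ} (G : DiGraph m n) (hconn : (toSG G).Connected)
    (g : ℕ) (hg : dgirth G = (g : ℕ∞)) (s : ℕ) :
    ((∀ η : Fin n → ℝ, (inc G).mulVec η = 0 → η ≠ 0 →
        ∀ S : Finset (Fin n), S.Nonempty → S.card ≤ s →
          ∑ i ∈ S, |η i| < ∑ i ∈ Sᶜ, |η i|) ↔ 2 * s < g) ∧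
      sSup {t : ℝ | ∃ S : Finset (Fin n), S.card ≤ s ∧
          ∃ η : Fin n → ℝ, (inc G).mulVec η = 0 ∧ l1 η ≤ 1 ∧
            t = ∑ i ∈ S, |η i|} =
        min ((s : ℝ) / (g : ℝ)) 1 := by
  classical
  obtain ⟨⟨u0, hcyc0⟩, hbound⟩ := girth_facts G hg
  obtain ⟨hg3, hinj0, hC0'⟩ := hcyc0
  have hC0 : ∀ i < g, ∃ e, IsStep G g u0 i e := hC0'
  have hg0 : (0 : ℝ) < g := by exact_mod_cast (by omega : 0 < g)
  have key := key_bound G hbound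
  set w0 := cycVec G g u0 with hw0
  have hl1w0 : l1 w0 = g := l1_cycVec G hg3 hinj0 hC0
  have hnull0 : (inc G).mulVec w0 = 0 := mulVec_cycVec G hg3 hinj0 hC0
  have hsupp0 : (Finset.univ.filter fun e => w0 e ≠ 0).card = g :=
    card_support G hg3 hinj0 hC0
  have habs0 : ∀ e, w0 e ≠ 0 → |w0 e| = 1 := fun e he => cycVec_abs G hg3 hinj0 he
  constructor
  · constructor
    · -- NSP → 2s < g
      intro hNSP
      by_cases hs0 : s = 0
      · omega
      -- pick S inside the support of w0
      obtain ⟨S, hSsub, hScard⟩ :=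
        Finset.exists_subset_card_eq (s := Finset.univ.filter fun e => w0 e ≠ 0) (n := min s g)
          (by rw [hsupp0]; exact min_le_right _ _)
      have hSne : S.Nonempty := Finset.card_pos.1 (by rw [hScard]; exact lt_min (Nat.pos_of_ne_zero hs0) (by omega))
      have hw0ne : w0 ≠ 0 := by
        intro h
        rw [h] at hl1w0
        simp [l1] at hl1w0
        linarith [hg0, hl1w0]
      have hlt := hNSP w0 hnull0 hw0ne S hSne (by rw [hScard]; exact min_le_left _ _)
      have hsum1 : ∑ i ∈ S, |w0 i| = (min s g : ℝ) := by
        rw [Finset.sum_congr rfl (fun i hi => habs0 i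
          (Finset.mem_filter.1 (hSsub hi)).2), Finset.sum_const, hScard, nsmul_eq_mul, mul_one]
        push_cast
        ring
      have hsum2 : ∑ i ∈ S, |w0 i| + ∑ i ∈ Sᶜ, |w0 i| = (g : ℝ) := by
        rw [Finset.sum_add_sum_compl, ← l1, hl1w0]
      rw [hsum1] at hlt hsum2
      have : (min s g : ℝ) < (g : ℝ) - (min s g : ℝ) := by linarith
      have h2 : 2 * min s g < g := by
        have : ((2 * min s g : ℕ) : ℝ) < (g : ℝ) := by push_cast; linarith
        exact_mod_cast this
      omega
    · -- 2s < g → NSP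
      intro h2s η hnull hne S hSne hScard
      have hl1pos : 0 < l1 η := by
        obtain ⟨e, he⟩ := Function.ne_iff.1 hne
        have h1 : |η e| ≤ l1 η :=
          Finset.single_le_sum (fun i _ => abs_nonneg (η i)) (Finset.mem_univ e)
        have := abs_pos.2 he
        linarith
      have hterm : ∀ i, |η i| ≤ l1 η / g := by
        intro i
        rw [le_div_iff₀ hg0]
        have := key η hnull i
        linarith
      have h1 : ∑ i ∈ S, |η i| ≤ (S.card : ℝ) * (l1 η / g) := by
        have := Finset.sum_le_card_nsmul S (fun i => |η i|) (l1 η / g) (fun i _ => hterm i)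
        rwa [nsmul_eq_mul] at this
      have h2 : (S.card : ℝ) * (l1 η / g) ≤ (s : ℝ) * (l1 η / g) :=
        mul_le_mul_of_nonneg_right (by exact_mod_cast hScard)
          (le_of_lt (div_pos hl1pos hg0))
      have h3 : (s : ℝ) * (l1 η / g) < l1 η / 2 := by
        have hcast : 2 * (s : ℝ) < (g : ℝ) := by exact_mod_cast h2s
        have hd : 0 < l1 η / g := div_pos hl1pos hg0
        have hmul := mul_lt_mul_of_pos_right (show (s:ℝ) < (g:ℝ)/2 by linarith) hd
        have heq : ((g:ℝ)/2) * (l1 η / g) = l1 η / 2 := by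
          field_simp
        linarith
      have hsplit : ∑ i ∈ S, |η i| + ∑ i ∈ Sᶜ, |η i| = l1 η := by
        rw [Finset.sum_add_sum_compl, ← l1]
      linarith
  · -- the nullspace constant
    apply le_antisymm
    · -- sSup ≤ min
      apply Real.sSup_le
      · rintro t ⟨S, hS, η, hnull, hl1, rfl⟩
        apply le_min
        · -- ≤ s/g
          have hterm : ∀ i, |η i| ≤ 1 / g := by
            intro i
            rw [le_div_iff₀ hg0]
            have := key η hnull i
            linarith
          have h1 : ∑ i ∈ S, |η i| ≤ (S.card : ℝ) * (1 / g) := by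
            have := Finset.sum_le_card_nsmul S (fun i => |η i|) (1 / g) (fun i _ => hterm i)
            rwa [nsmul_eq_mul] at this
          have h2 : (S.card : ℝ) * (1 / g) ≤ (s : ℝ) * (1 / g) :=
            mul_le_mul_of_nonneg_right (by exact_mod_cast hS) (by positivity)
          calc ∑ i ∈ S, |η i| ≤ (S.card : ℝ) * (1 / g) := h1
            _ ≤ (s : ℝ) * (1 / g) := h2
            _ = (s : ℝ) / g := by ring
        · -- ≤ 1
          calc ∑ i ∈ S, |η i| ≤ ∑ i, |η i| :=
                Finset.sum_le_sum_of_subset_of_nonneg (Finset.subset_univ S)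
                  (fun i _ _ => abs_nonneg _)
            _ = l1 η := rfl
            _ ≤ 1 := hl1
      · exact le_min (by positivity) zero_le_one
    · -- min ≤ sSup
      have hbdd : BddAbove {t : ℝ | ∃ S : Finset (Fin n), S.card ≤ s ∧
          ∃ η : Fin n → ℝ, (inc G).mulVec η = 0 ∧ l1 η ≤ 1 ∧ t = ∑ i ∈ S, |η i|} := by
        refine ⟨1, ?_⟩
        rintro t ⟨S, hS, η, hnull, hl1, rfl⟩
        calc ∑ i ∈ S, |η i| ≤ ∑ i, |η i| :=
              Finset.sum_le_sum_of_subset_of_nonneg (Finset.subset_univ S)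
                (fun i _ _ => abs_nonneg _)
          _ = l1 η := rfl
          _ ≤ 1 := hl1
      set η0 : Fin n → ℝ := fun e => (g : ℝ)⁻¹ * w0 e with hη0
      have hη0null : (inc G).mulVec η0 = 0 := by
        have hrw : η0 = (g : ℝ)⁻¹ • w0 := rfl
        rw [hrw, Matrix.mulVec_smul, hnull0, smul_zero]
      have habsη0 : ∀ e, w0 e ≠ 0 → |η0 e| = (g : ℝ)⁻¹ := by
        intro e he
        show |(g : ℝ)⁻¹ * w0 e| = (g : ℝ)⁻¹
        rw [abs_mul, habs0 e he, mul_one, abs_of_nonneg (by positivity : (0:ℝ) ≤ (g:ℝ)⁻¹)]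
      have hl1η0 : l1 η0 = 1 := by
        have habs' : ∀ e, |η0 e| = (g : ℝ)⁻¹ * |w0 e| := by
          intro e
          show |(g : ℝ)⁻¹ * w0 e| = _
          rw [abs_mul, abs_of_nonneg (by positivity : (0:ℝ) ≤ (g:ℝ)⁻¹)]
        rw [l1, Finset.sum_congr rfl (fun e _ => habs' e), ← Finset.mul_sum,
          show ∑ e, |w0 e| = l1 w0 from rfl, hl1w0]
        field_simp
      by_cases hsg : s ≤ g
      · have hmin : min ((s : ℝ) / g) 1 = (s : ℝ) / g :=
          min_eq_left (by rw [div_le_one hg0]; exact_mod_cast hsg)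
        rw [hmin]
        apply le_csSup hbdd
        obtain ⟨S, hSsub, hScard⟩ :=
          Finset.exists_subset_card_eq (s := Finset.univ.filter fun e => w0 e ≠ 0) (n := s)
            (by rw [hsupp0]; exact hsg)
        refine ⟨S, le_of_eq hScard, η0, hη0null, le_of_eq hl1η0, ?_⟩
        rw [Finset.sum_congr rfl (fun i hi => habsη0 i (Finset.mem_filter.1 (hSsub hi)).2),
          Finset.sum_const, hScard, nsmul_eq_mul, div_eq_mul_inv]
      · push_neg at hsg
        have hmin : min ((s : ℝ) / g) 1 = 1 := by
          apply min_eq_right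
          rw [le_div_iff₀ hg0, one_mul]
          exact_mod_cast hsg.le
        rw [hmin]
        apply le_csSup hbdd
        refine ⟨Finset.univ.filter fun e => w0 e ≠ 0, by rw [hsupp0]; omega,
          η0, hη0null, le_of_eq hl1η0, ?_⟩
        rw [Finset.sum_congr rfl (fun i hi => habsη0 i (Finset.mem_filter.1 hi).2),
          Finset.sum_const, hsupp0, nsmul_eq_mul]
        field_simp
end

section
/- Let A be the incidence matrix of a simple connected directed graph G and let S be a nonempty set of edges. Every vector x̄ with support contained in S is the unique minimizer of ‖x‖₁ subject to Ax = Ax̄ if and only if for every simple cycle C of G, the number of edges of C that lie in S is strictly less than half the length of C. -/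
open Finset

namespace Stmt16Aux

variable {m n : ℕ}

lemma pair_eq {α : Type*} [DecidableEq α] {a b c d : α}
    (h : ({a, b} : Finset α) = {c, d}) : (a = c ∧ b = d) ∨ (a = d ∧ b = c) := by
  have hm := Finset.ext_iff.mp h
  simp only [Finset.mem_insert, Finset.mem_singleton] at hm
  rcases (hm a).mp (Or.inl rfl) with h1 | h1 <;>
    rcases (hm b).mp (Or.inr rfl) with h2 | h2 <;>
      rcases (hm c).mpr (Or.inl rfl) with h3 | h3 <;>
        rcases (hm d).mpr (Or.inr rfl) with h4 | h4 <;> tauto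

lemma mod_succ {i r : ℕ} (h : i < r) : (i + 1) % r = if i + 1 = r then 0 else i + 1 := by
  rcases Nat.lt_or_ge (i + 1) r with h' | h'
  · rw [Nat.mod_eq_of_lt h', if_neg (by omega)]
  · have he : i + 1 = r := by omega
    simp [he]

/-- Edge `j` realizes step `i` of the cycle. -/
def Mtc (G : DiGraph m n) (r : ℕ) (u : ℕ → Fin m) (j : Fin n) (i : ℕ) : Prop :=
  (G.src j = u i ∧ G.tgt j = u ((i + 1) % r)) ∨ (G.src j = u ((i + 1) % r) ∧ G.tgt j = u i)

instance {G : DiGraph m n} {r : ℕ} {u : ℕ → Fin m} {j : Fin n} {i : ℕ} :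
    Decidable (Mtc G r u j i) := by unfold Mtc; infer_instance

variable {G : DiGraph m n} {r : ℕ} {u : ℕ → Fin m}

lemma succ_lt (h3 : 3 ≤ r) {i : ℕ} (hi : i < r) : (i + 1) % r < r :=
  Nat.mod_lt _ (by omega)

lemma succ_ne (h3 : 3 ≤ r) {i : ℕ} (hi : i < r) : (i + 1) % r ≠ i := by
  rw [mod_succ hi]; split <;> omega

lemma ne_succ (hc : IsSimpleCycle G r u) {i : ℕ} (hi : i < r) : u i ≠ u ((i + 1) % r) := by
  intro h
  exact succ_ne hc.1 hi (hc.2.1 _ (succ_lt hc.1 hi) _ hi h.symm)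

lemma pair_of_mtc {j : Fin n} {i : ℕ} (h : Mtc G r u j i) :
    ({G.src j, G.tgt j} : Finset (Fin m)) = {u i, u ((i + 1) % r)} := by
  rcases h with ⟨h1, h2⟩ | ⟨h1, h2⟩
  · rw [h1, h2]
  · rw [h1, h2, Finset.pair_comm]

lemma uniq_i (hc : IsSimpleCycle G r u) {j : Fin n} {i i' : ℕ} (hi : i < r) (hi' : i' < r)
    (h : Mtc G r u j i) (h' : Mtc G r u j i') : i = i' := by
  have hp := (pair_of_mtc h).symm.trans (pair_of_mtc h')
  have inj := hc.2.1
  rcases pair_eq hp with ⟨e1, e2⟩ | ⟨e1, e2⟩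
  · exact inj _ hi _ hi' e1
  · have q1 : i = (i' + 1) % r := inj _ hi _ (succ_lt hc.1 hi') e1
    have q2 : (i + 1) % r = i' := inj _ (succ_lt hc.1 hi) _ hi' e2
    rw [mod_succ hi'] at q1
    rw [mod_succ hi] at q2
    have h3 := hc.1
    split at q1 <;> split at q2 <;> omega

lemma uniq_j (hc : IsSimpleCycle G r u) {j j' : Fin n} {i : ℕ}
    (h : Mtc G r u j i) (h' : Mtc G r u j' i) : j = j' :=
  G.simple _ _ ((pair_of_mtc h).trans (pair_of_mtc h').symm)

lemma exists_mtc (hc : IsSimpleCycle G r u) {i : ℕ} (hi : i < r) : ∃ j, Mtc G r u j i :=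
  hc.2.2 i hi

lemma cycVec_eq (hc : IsSimpleCycle G r u) {j : Fin n} {i : ℕ} (hi : i < r)
    (h : Mtc G r u j i) :
    cycVec G r u j = if G.src j = u i ∧ G.tgt j = u ((i + 1) % r) then 1 else -1 := by
  unfold cycVec
  rw [Finset.sum_eq_single_of_mem i (Finset.mem_range.mpr hi)]
  · rcases h with ⟨h1, h2⟩ | ⟨h1, h2⟩
    · have hq : ¬(G.src j = u ((i + 1) % r) ∧ G.tgt j = u i) := by
        rintro ⟨q1, _⟩; exact ne_succ hc hi (h1 ▸ q1)
      simp [h1, h2, ne_succ hc hi, (ne_succ hc hi).symm]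
    · have hp : ¬(G.src j = u i ∧ G.tgt j = u ((i + 1) % r)) := by
        rintro ⟨q1, _⟩; exact ne_succ hc hi (q1 ▸ h1)
      simp [h1, h2, ne_succ hc hi, (ne_succ hc hi).symm]
  · intro i' hi' hne
    have hi'' := Finset.mem_range.mp hi'
    have hp : ¬(G.src j = u i' ∧ G.tgt j = u ((i' + 1) % r)) := by
      intro hm; exact hne (uniq_i hc hi'' hi (Or.inl hm) h)
    have hq : ¬(G.src j = u ((i' + 1) % r) ∧ G.tgt j = u i') := by
      intro hm; exact hne (uniq_i hc hi'' hi (Or.inr hm) h)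
    simp [hp, hq]

lemma cycVec_zero {j : Fin n} (h : ∀ i < r, ¬ Mtc G r u j i) : cycVec G r u j = 0 := by
  unfold cycVec
  apply Finset.sum_eq_zero
  intro i hi
  have := h i (Finset.mem_range.mp hi)
  have hp : ¬(G.src j = u i ∧ G.tgt j = u ((i + 1) % r)) := fun hm => this (Or.inl hm)
  have hq : ¬(G.src j = u ((i + 1) % r) ∧ G.tgt j = u i) := fun hm => this (Or.inr hm)
  simp [hp, hq]

lemma cycVec_mem (hc : IsSimpleCycle G r u) {j : Fin n} (h : cycVec G r u j ≠ 0) :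
    cycVec G r u j = 1 ∨ cycVec G r u j = -1 := by
  by_cases hm : ∃ i < r, Mtc G r u j i
  · obtain ⟨i, hi, hmi⟩ := hm
    rw [cycVec_eq hc hi hmi]
    split
    · exact Or.inl rfl
    · exact Or.inr rfl
  · push_neg at hm
    exact absurd (cycVec_zero hm) h

lemma abs_cycVec_eq_ite (hc : IsSimpleCycle G r u) (j : Fin n) :
    |cycVec G r u j| = if cycVec G r u j ≠ 0 then (1 : ℝ) else 0 := by
  split
  · rcases cycVec_mem hc (by assumption) with h | h <;> rw [h] <;> norm_num
  · rename_i h; push_neg at h; rw [h, abs_zero]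

lemma sum_abs_cycVec_filter (hc : IsSimpleCycle G r u) (T : Finset (Fin n)) :
    ∑ j ∈ T, |cycVec G r u j| =
      ((T.filter (fun j => cycVec G r u j ≠ 0)).card : ℝ) := by
  classical
  rw [Finset.card_filter]
  push_cast
  apply Finset.sum_congr rfl
  intro j _
  rw [abs_cycVec_eq_ite hc]

lemma sum_rot (r : ℕ) (f : ℕ → ℝ) (hr : 0 < r) :
    ∑ i ∈ Finset.range r, f ((i + 1) % r) = ∑ i ∈ Finset.range r, f i := by
  apply Finset.sum_nbij' (i := fun i => (i + 1) % r) (j := fun i => (i + (r - 1)) % r)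
  · intro a ha
    exact Finset.mem_range.mpr (Nat.mod_lt _ hr)
  · intro a ha
    exact Finset.mem_range.mpr (Nat.mod_lt _ hr)
  · intro a ha
    have ha' := Finset.mem_range.mp ha
    rcases Nat.lt_or_ge (a + 1) r with h | h
    · rw [Nat.mod_eq_of_lt h]
      have : a + 1 + (r - 1) = a + r := by omega
      rw [this, Nat.add_mod_right, Nat.mod_eq_of_lt ha']
    · have he : a + 1 = r := by omega
      rw [he, Nat.mod_self, Nat.zero_add, Nat.mod_eq_of_lt (show r - 1 < r by omega)]
      omega
  · intro a ha
    have ha' := Finset.mem_range.mp ha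
    rcases Nat.eq_zero_or_pos a with h | h
    · subst h
      rw [Nat.zero_add, Nat.mod_eq_of_lt (show r - 1 < r by omega)]
      have h2 : r - 1 + 1 = r := by omega
      rw [h2, Nat.mod_self]
    · have h1 : a + (r - 1) = (a - 1) + r := by omega
      rw [h1, Nat.add_mod_right, Nat.mod_eq_of_lt (show a - 1 < r by omega)]
      have h2 : a - 1 + 1 = a := by omega
      rw [h2, Nat.mod_eq_of_lt ha']
  · intro a ha
    rfl

lemma cycVec_mulVec (hc : IsSimpleCycle G r u) :
    (inc G).mulVec (cycVec G r u) = 0 := by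
  classical
  funext v
  show ∑ j, inc G v j * cycVec G r u j = 0
  unfold cycVec
  simp_rw [Finset.mul_sum]
  rw [Finset.sum_comm]
  have hterm : ∀ i ∈ Finset.range r,
      (∑ j, inc G v j *
        ((if G.src j = u i ∧ G.tgt j = u ((i + 1) % r) then (1 : ℝ) else 0) -
         (if G.src j = u ((i + 1) % r) ∧ G.tgt j = u i then (1 : ℝ) else 0))) =
      ((if u ((i + 1) % r) = v then (1 : ℝ) else 0) - (if u i = v then 1 else 0)) := by
    intro i hi
    have hi' := Finset.mem_range.mp hi
    obtain ⟨j₀, hj₀⟩ := exists_mtc hc hi'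
    rw [Finset.sum_eq_single_of_mem j₀ (Finset.mem_univ _)]
    · rcases hj₀ with ⟨h1, h2⟩ | ⟨h1, h2⟩
      · unfold inc
        simp only [h1, h2]
        have hne := ne_succ hc hi'
        by_cases e1 : u ((i + 1) % r) = v <;> by_cases e2 : u i = v <;>
          simp [e1, e2] <;> first
            | (exact absurd (e2 ▸ e1) hne.symm)
            | skip
      · unfold inc
        simp only [h1, h2]
        have hne := ne_succ hc hi'
        by_cases e1 : u ((i + 1) % r) = v <;> by_cases e2 : u i = v <;>
          simp [e1, e2] <;> first
            | (exact absurd (e2 ▸ e1) hne.symm)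
            | skip
    · intro j hj hjne
      have hp : ¬(G.src j = u i ∧ G.tgt j = u ((i + 1) % r)) := by
        intro hm; exact hjne (uniq_j hc (Or.inl hm) hj₀)
      have hq : ¬(G.src j = u ((i + 1) % r) ∧ G.tgt j = u i) := by
        intro hm; exact hjne (uniq_j hc (Or.inr hm) hj₀)
      simp [hp, hq]
  rw [Finset.sum_congr rfl hterm, Finset.sum_sub_distrib,
    sum_rot r (fun i => if u i = v then (1 : ℝ) else 0) (by have := hc.1; omega), sub_self]

lemma abs_cycVec_eq_sum (hc : IsSimpleCycle G r u) (j : Fin n) :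
    |cycVec G r u j| = ∑ i ∈ Finset.range r, (if Mtc G r u j i then (1 : ℝ) else 0) := by
  classical
  by_cases hm : ∃ i < r, Mtc G r u j i
  · obtain ⟨i₀, hi₀, hmi₀⟩ := hm
    rw [Finset.sum_eq_single_of_mem i₀ (Finset.mem_range.mpr hi₀)]
    · rw [if_pos hmi₀, cycVec_eq hc hi₀ hmi₀]
      split <;> norm_num
    · intro i hi hne
      rw [if_neg]
      intro hmi
      exact hne (uniq_i hc (Finset.mem_range.mp hi) hi₀ hmi hmi₀)
  · push_neg at hm
    rw [cycVec_zero hm, abs_zero]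
    symm
    apply Finset.sum_eq_zero
    intro i hi
    exact if_neg (hm i (Finset.mem_range.mp hi))

lemma sum_abs_cycVec_total (hc : IsSimpleCycle G r u) :
    ∑ j, |cycVec G r u j| = (r : ℝ) := by
  classical
  simp_rw [abs_cycVec_eq_sum hc]
  rw [Finset.sum_comm]
  have : ∀ i ∈ Finset.range r, (∑ j, if Mtc G r u j i then (1 : ℝ) else 0) = 1 := by
    intro i hi
    have hi' := Finset.mem_range.mp hi
    obtain ⟨j₀, hj₀⟩ := exists_mtc hc hi'
    rw [Finset.sum_eq_single_of_mem j₀ (Finset.mem_univ _), if_pos hj₀]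
    intro j hj hne
    exact if_neg (fun hm => hne (uniq_j hc hm hj₀))
  rw [Finset.sum_congr rfl this, Finset.sum_const, Finset.card_range, nsmul_eq_mul, mul_one]

/-- Auxiliary "flow" relation: there is positive flow of `η` from `v` to `w'`. -/
def HA (G : DiGraph m n) (η : Fin n → ℝ) (v w' : Fin m) : Prop :=
  ∃ j, (G.src j = v ∧ G.tgt j = w' ∧ 0 < η j) ∨ (G.src j = w' ∧ G.tgt j = v ∧ η j < 0)

lemma ha_out {η : Fin n → ℝ} (h0 : (inc G).mulVec η = 0) (v : Fin m)
    (hin : ∃ w', HA G η w' v) : ∃ w', HA G η v w' := by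
  have hv : ∑ j, inc G v j * η j = 0 := congrFun h0 v
  obtain ⟨w', j₀, hj₀⟩ := hin
  have hpos : 0 < inc G v j₀ * η j₀ := by
    rcases hj₀ with ⟨h1, h2, h3⟩ | ⟨h1, h2, h3⟩
    · have : inc G v j₀ = 1 := by unfold inc; rw [if_pos h2]
      rw [this, one_mul]; exact h3
    · have hne : ¬ G.tgt j₀ = v := fun h => G.loopless j₀ (h1.trans h.symm)
      have : inc G v j₀ = -1 := by unfold inc; rw [if_neg hne, if_pos h1]
      rw [this]; linarith
  have hneg : ∃ j₁, inc G v j₁ * η j₁ < 0 := by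
    by_contra hno
    push_neg at hno
    have : 0 < ∑ j, inc G v j * η j :=
      Finset.sum_pos' (fun j _ => hno j) ⟨j₀, Finset.mem_univ _, hpos⟩
    linarith
  obtain ⟨j₁, ht⟩ := hneg
  unfold inc at ht
  split_ifs at ht with h1 h2
  · rw [one_mul] at ht
    exact ⟨G.src j₁, j₁, Or.inr ⟨rfl, h1, ht⟩⟩
  · rw [neg_one_mul] at ht
    exact ⟨G.tgt j₁, j₁, Or.inl ⟨h2, rfl, by linarith⟩⟩
  · rw [zero_mul] at ht
    exact absurd ht (lt_irrefl 0)

lemma ha_start {η : Fin n → ℝ} (hη : η ≠ 0) : ∃ v w', HA G η v w' := by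
  obtain ⟨j, hj⟩ := Function.ne_iff.mp hη
  rcases lt_or_gt_of_ne (show η j ≠ 0 from hj) with h | h
  · exact ⟨G.tgt j, G.src j, j, Or.inr ⟨rfl, rfl, h⟩⟩
  · exact ⟨G.src j, G.tgt j, j, Or.inl ⟨rfl, rfl, h⟩⟩

lemma ha_antisymm {η : Fin n → ℝ} {x y : Fin m} (hxy : x ≠ y)
    (h1 : HA G η x y) (h2 : HA G η y x) : False := by
  obtain ⟨j, hj⟩ := h1
  obtain ⟨k, hk⟩ := h2
  have pj : ({G.src j, G.tgt j} : Finset (Fin m)) = {x, y} := by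
    rcases hj with ⟨a1, a2, _⟩ | ⟨a1, a2, _⟩
    · rw [a1, a2]
    · rw [a1, a2, Finset.pair_comm]
  have pk : ({G.src k, G.tgt k} : Finset (Fin m)) = {x, y} := by
    rcases hk with ⟨a1, a2, _⟩ | ⟨a1, a2, _⟩
    · rw [a1, a2, Finset.pair_comm]
    · rw [a1, a2]
  have hjk : j = k := G.simple j k (pj.trans pk.symm)
  subst hjk
  rcases hj with ⟨a1, a2, a3⟩ | ⟨a1, a2, a3⟩ <;> rcases hk with ⟨b1, b2, b3⟩ | ⟨b1, b2, b3⟩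
  · exact hxy (a1.symm.trans b1)
  · linarith
  · linarith
  · exact hxy (b1.symm.trans a1)

lemma conform {η : Fin n → ℝ} (h0 : (inc G).mulVec η = 0) (hη : η ≠ 0) :
    ∃ r u, IsSimpleCycle G r u ∧ ∀ j, cycVec G r u j ≠ 0 → 0 < cycVec G r u j * η j := by
  classical
  obtain ⟨v₀, w₀, hv₀⟩ := ha_start (G := G) hη
  have hstep : ∀ v : {v : Fin m // ∃ w', HA G η v w'},
      ∃ w', HA G η v.1 w' ∧ ∃ w'', HA G η w' w'' := by
    rintro ⟨v, w', hw'⟩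
    exact ⟨w', hw', ha_out h0 w' ⟨v, hw'⟩⟩
  choose nxt hnxt1 hnxt2 using hstep
  set g : {v : Fin m // ∃ w', HA G η v w'} → {v : Fin m // ∃ w', HA G η v w'} :=
    fun p => ⟨nxt p, hnxt2 p⟩ with hg
  set p₀ : {v : Fin m // ∃ w', HA G η v w'} := ⟨v₀, w₀, hv₀⟩ with hp₀
  set V : ℕ → Fin m := fun k => (g^[k] p₀).1 with hV
  have hstepV : ∀ k, HA G η (V k) (V (k + 1)) := by
    intro k
    have hit : g^[k + 1] p₀ = g (g^[k] p₀) := Function.iterate_succ_apply' g k p₀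
    show HA G η (g^[k] p₀).1 (g^[k + 1] p₀).1
    rw [hit]
    exact hnxt1 _
  have hex : ∃ b, ∃ a, a < b ∧ V a = V b := by
    have hcard : Fintype.card (Fin m) < Fintype.card (Fin (m + 1)) := by simp
    obtain ⟨a, b, hab, he⟩ :=
      Fintype.exists_ne_map_eq_of_card_lt (fun i : Fin (m + 1) => V i) hcard
    rcases Nat.lt_trichotomy a.1 b.1 with h | h | h
    · exact ⟨b.1, a.1, h, he⟩
    · exact absurd (Fin.ext h) hab
    · exact ⟨a.1, b.1, h, he.symm⟩
  set b₀ := Nat.find hex with hb₀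
  obtain ⟨a₀, ha₀b, hVab⟩ := Nat.find_spec hex
  have hmin : ∀ b' < b₀, ¬∃ a, a < b' ∧ V a = V b' := fun b' hb' => Nat.find_min hex hb'
  have hdist : ∀ i i', a₀ ≤ i → i < b₀ → a₀ ≤ i' → i' < b₀ → V i = V i' → i = i' := by
    intro i i' _ h2 _ h4 he
    rcases Nat.lt_trichotomy i i' with h | h | h
    · exact absurd ⟨i, h, he⟩ (hmin i' h4)
    · exact h
    · exact absurd ⟨i', h, he.symm⟩ (hmin i h2)
  set r := b₀ - a₀ with hr
  set u : ℕ → Fin m := fun i => V (a₀ + i) with hu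
  have hr1 : 1 ≤ r := by omega
  have hHA : ∀ i < r, HA G η (u i) (u ((i + 1) % r)) := by
    intro i hi
    have h1 : HA G η (V (a₀ + i)) (V (a₀ + i + 1)) := hstepV _
    have h2 : V (a₀ + i + 1) = u ((i + 1) % r) := by
      rcases Nat.lt_or_ge (i + 1) r with h | h
      · rw [Nat.mod_eq_of_lt h]
        show V (a₀ + i + 1) = V (a₀ + (i + 1))
        rfl
      · have he : i + 1 = r := by omega
        rw [he, Nat.mod_self]
        show V (a₀ + i + 1) = V (a₀ + 0)
        have e1 : a₀ + i + 1 = b₀ := by omega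
        have e2 : a₀ + 0 = a₀ := rfl
        rw [e1, e2]
        exact hVab.symm
    rw [h2] at h1
    exact h1
  have hnotself : ∀ v, ¬ HA G η v v := by
    rintro v ⟨j, ⟨h1, h2, _⟩ | ⟨h1, h2, _⟩⟩ <;> exact G.loopless j (h1.trans h2.symm)
  have hune : ∀ i i', i < r → i' < r → i ≠ i' → u i ≠ u i' := by
    intro i i' hi hi' hne he
    exact hne (by have := hdist (a₀ + i) (a₀ + i') (by omega) (by omega) (by omega) (by omega) he; omega)
  have h3 : 3 ≤ r := by
    rcases Nat.lt_or_ge r 3 with hlt | hge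
    · exfalso
      interval_cases r
      · have := hHA 0 (by omega)
        rw [show (0 + 1) % 1 = 0 by rfl] at this
        exact hnotself _ this
      · have h01 := hHA 0 (by omega)
        have h10 := hHA 1 (by omega)
        rw [show (0 + 1) % 2 = 1 by rfl] at h01
        rw [show (1 + 1) % 2 = 0 by rfl] at h10
        exact ha_antisymm (hune 0 1 (by omega) (by omega) (by omega)) h01 h10
    · exact hge
  have hcyc : IsSimpleCycle G r u := by
    refine ⟨h3, ?_, ?_⟩
    · intro i hi i' hi' he
      have := hdist (a₀ + i) (a₀ + i') (by omega) (by omega) (by omega) (by omega) he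
      omega
    · intro i hi
      obtain ⟨j, hj⟩ := hHA i hi
      exact ⟨j, hj.imp (fun h => ⟨h.1, h.2.1⟩) (fun h => ⟨h.1, h.2.1⟩)⟩
  refine ⟨r, u, hcyc, ?_⟩
  intro j hne
  have hm : ∃ i < r, Mtc G r u j i := by
    by_contra h
    push_neg at h
    exact hne (cycVec_zero h)
  obtain ⟨i, hi, hmi⟩ := hm
  obtain ⟨j', hj'⟩ := hHA i hi
  have hmj' : Mtc G r u j' i := hj'.imp (fun h => ⟨h.1, h.2.1⟩) (fun h => ⟨h.1, h.2.1⟩)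
  have hjj : j = j' := uniq_j hcyc hmi hmj'
  subst hjj
  rw [cycVec_eq hcyc hi hmi]
  rcases hj' with ⟨h1, h2, hs⟩ | ⟨h1, h2, hs⟩
  · rw [if_pos ⟨h1, h2⟩]; linarith
  · rw [if_neg (fun hp => ne_succ hcyc hi (hp.1.symm.trans h1))]
    linarith

lemma nsp (S : Finset (Fin n))
    (Hcyc : ∀ r u, IsSimpleCycle G r u →
      2 * (S.filter (fun j => cycVec G r u j ≠ 0)).card < r) :
    ∀ N (η : Fin n → ℝ), (Finset.univ.filter (fun j => η j ≠ 0)).card ≤ N →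
      (inc G).mulVec η = 0 → η ≠ 0 →
      ∑ j ∈ S, |η j| < ∑ j ∈ Sᶜ, |η j| := by
  intro N
  induction N with
  | zero =>
    intro η hcard h0 hne
    exfalso
    apply hne
    funext j
    by_contra hj
    have : j ∈ Finset.univ.filter (fun j => η j ≠ 0) :=
      Finset.mem_filter.mpr ⟨Finset.mem_univ _, hj⟩
    have := Finset.card_pos.mpr ⟨j, this⟩
    omega
  | succ N ih =>
    intro η hcard h0 hne
    obtain ⟨r, u, hcyc, hconf⟩ := conform h0 hne
    set w : Fin n → ℝ := cycVec G r u with hw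
    set T : Finset (Fin n) := Finset.univ.filter (fun j => w j ≠ 0) with hT
    have hTne : T.Nonempty := by
      obtain ⟨j₀, hj₀⟩ := exists_mtc hcyc (show 0 < r by have := hcyc.1; omega)
      refine ⟨j₀, Finset.mem_filter.mpr ⟨Finset.mem_univ _, ?_⟩⟩
      rw [hw, cycVec_eq hcyc (show 0 < r by have := hcyc.1; omega) hj₀]
      split <;> norm_num
    have hηT : ∀ j ∈ T, 0 < w j * η j := by
      intro j hj
      exact hconf j (Finset.mem_filter.mp hj).2
    have hηne : ∀ j ∈ T, η j ≠ 0 := by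
      intro j hj he
      have := hηT j hj
      rw [he, mul_zero] at this
      exact lt_irrefl _ this
    set lam : ℝ := T.inf' hTne (fun j => |η j|) with hlam
    have hlam_pos : 0 < lam := by
      rw [hlam, Finset.lt_inf'_iff]
      intro j hj
      exact abs_pos.mpr (hηne j hj)
    have hlam_le : ∀ j ∈ T, lam ≤ |η j| := fun j hj => Finset.inf'_le _ hj
    obtain ⟨js, hjsT, hjseq⟩ := Finset.exists_mem_eq_inf' hTne (fun j => |η j|)
    set η' : Fin n → ℝ := fun j => η j - lam * w j with hη'
    have key : ∀ j, |η' j| = |η j| - lam * |w j| := by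
      intro j
      show |η j - lam * w j| = |η j| - lam * |w j|
      by_cases hwj : w j = 0
      · rw [hwj, mul_zero, sub_zero, abs_zero, mul_zero, sub_zero]
      · have hwT : j ∈ T := Finset.mem_filter.mpr ⟨Finset.mem_univ _, hwj⟩
        have hle := hlam_le j hwT
        have hprod := hηT j hwT
        have hmem : w j = 1 ∨ w j = -1 := cycVec_mem hcyc hwj
        rcases hmem with h1 | h1
        · rw [h1, mul_one, abs_one, mul_one]
          rw [h1, one_mul] at hprod
          rw [abs_of_pos hprod] at hle ⊢
          exact abs_of_nonneg (by linarith)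
        · rw [h1] at hprod
          have hneg : η j < 0 := by nlinarith
          rw [h1, abs_neg, abs_one, mul_one, mul_neg_one, sub_neg_eq_add]
          rw [abs_of_neg hneg] at hle ⊢
          rw [abs_of_nonpos (show η j + lam ≤ 0 by linarith)]
          ring
    have hsupp : ∀ j, η' j ≠ 0 → η j ≠ 0 := by
      intro j hj he
      apply hj
      by_cases hwj : w j = 0
      · simp [hη', hwj, he]
      · exact absurd he (hηne j (Finset.mem_filter.mpr ⟨Finset.mem_univ _, hwj⟩))
    have hjs_abs : |w js| = 1 := by
      have hmem : w js = 1 ∨ w js = -1 := cycVec_mem hcyc (Finset.mem_filter.mp hjsT).2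
      rcases hmem with h1 | h1 <;> rw [h1] <;> norm_num
    have hzero : η' js = 0 := by
      have := key js
      rw [hjs_abs, mul_one, ← hjseq, sub_self] at this
      exact abs_eq_zero.mp this
    have hjs_mem : js ∈ Finset.univ.filter (fun j => η j ≠ 0) :=
      Finset.mem_filter.mpr ⟨Finset.mem_univ _, hηne js hjsT⟩
    have hcard' : (Finset.univ.filter (fun j => η' j ≠ 0)).card ≤ N := by
      have hsub : Finset.univ.filter (fun j => η' j ≠ 0) ⊆
          (Finset.univ.filter (fun j => η j ≠ 0)).erase js := by
        intro j hj
        have hj' := (Finset.mem_filter.mp hj).2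
        refine Finset.mem_erase.mpr ⟨?_, Finset.mem_filter.mpr ⟨Finset.mem_univ _, hsupp j hj'⟩⟩
        intro he
        exact hj' (he ▸ hzero)
      have h1 := Finset.card_le_card hsub
      rw [Finset.card_erase_of_mem hjs_mem] at h1
      have h2 := Finset.card_pos.mpr ⟨js, hjs_mem⟩
      omega
    have h0' : (inc G).mulVec η' = 0 := by
      have he : η' = η - lam • w := by
        funext j
        simp [hη', smul_eq_mul]
      have hwv : (inc G).mulVec w = 0 := cycVec_mulVec hcyc
      rw [he, Matrix.mulVec_sub, Matrix.mulVec_smul, hwv, h0]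
      simp
    have hsplit : ∀ T' : Finset (Fin n),
        ∑ j ∈ T', |η j| = ∑ j ∈ T', |η' j| + lam * ∑ j ∈ T', |w j| := by
      intro T'
      rw [Finset.mul_sum, ← Finset.sum_add_distrib]
      apply Finset.sum_congr rfl
      intro j _
      have := key j
      linarith
    have hcS : ∑ j ∈ S, |w j| = ((S.filter (fun j => w j ≠ 0)).card : ℝ) :=
      sum_abs_cycVec_filter hcyc S
    have htot : ∑ j ∈ S, |w j| + ∑ j ∈ Sᶜ, |w j| = (r : ℝ) := by
      rw [Finset.sum_add_sum_compl]
      exact sum_abs_cycVec_total hcyc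
    have hlt : ∑ j ∈ S, |w j| < ∑ j ∈ Sᶜ, |w j| := by
      have hnat : 2 * (S.filter (fun j => w j ≠ 0)).card < r := Hcyc r u hcyc
      have hcast : 2 * ((S.filter (fun j => w j ≠ 0)).card : ℝ) < (r : ℝ) := by
        exact_mod_cast hnat
      linarith [hcS, htot]
    have hle' : ∑ j ∈ S, |η' j| ≤ ∑ j ∈ Sᶜ, |η' j| := by
      by_cases he0 : η' = 0
      · have h1 : ∀ j, η' j = 0 := fun j => congrFun he0 j
        have e1 : ∑ j ∈ S, |η' j| = 0 := Finset.sum_eq_zero fun j _ => by rw [h1 j, abs_zero]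
        have e2 : ∑ j ∈ Sᶜ, |η' j| = 0 := Finset.sum_eq_zero fun j _ => by rw [h1 j, abs_zero]
        rw [e1, e2]
      · exact le_of_lt (ih η' hcard' h0' he0)
    have e1 := hsplit S
    have e2 := hsplit Sᶜ
    nlinarith [mul_lt_mul_of_pos_left hlt hlam_pos]

end Stmt16Aux

open Stmt16Aux in
theorem stmt16 {m n : ℕ} (G : DiGraph m n) (hconn : (toSG G).Connected)
    (S : Finset (Fin n)) (hS : S.Nonempty) :
    (∀ xb : Fin n → ℝ, (∀ i, xb i ≠ 0 → i ∈ S) →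
        ∀ x : Fin n → ℝ, (inc G).mulVec x = (inc G).mulVec xb → x ≠ xb →
          l1 xb < l1 x) ↔
      ∀ r u, IsSimpleCycle G r u →
        2 * (S.filter (fun j => cycVec G r u j ≠ 0)).card < r := by
  classical
  constructor
  · intro H r u hc
    obtain ⟨j₀, hj₀⟩ := exists_mtc hc (show 0 < r by have := hc.1; omega)
    have hw₀ : cycVec G r u j₀ ≠ 0 := by
      rw [cycVec_eq hc (show 0 < r by have := hc.1; omega) hj₀]
      split <;> norm_num
    set xb : Fin n → ℝ := fun j => if j ∈ S then cycVec G r u j else 0 with hxb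
    set x : Fin n → ℝ := fun j => xb j - cycVec G r u j with hx
    have hsupp : ∀ i, xb i ≠ 0 → i ∈ S := by
      intro i hi
      by_contra h
      exact hi (by simp [hxb, h])
    have hAx : (inc G).mulVec x = (inc G).mulVec xb := by
      have he : x = xb - cycVec G r u := funext fun j => rfl
      rw [he, Matrix.mulVec_sub, cycVec_mulVec hc, sub_zero]
    have hne : x ≠ xb := by
      intro h
      have h1 : xb j₀ - cycVec G r u j₀ = xb j₀ := congrFun h j₀
      exact hw₀ (by linarith)
    have hlt := H xb hsupp x hAx hne
    have e1 : l1 xb = ∑ j ∈ S, |cycVec G r u j| := by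
      unfold l1
      rw [← Finset.sum_add_sum_compl S]
      have p1 : ∑ j ∈ S, |xb j| = ∑ j ∈ S, |cycVec G r u j| :=
        Finset.sum_congr rfl fun j hj => by
          show |if j ∈ S then cycVec G r u j else 0| = _
          rw [if_pos hj]
      have p2 : ∑ j ∈ Sᶜ, |xb j| = 0 :=
        Finset.sum_eq_zero fun j hj => by
          show |if j ∈ S then cycVec G r u j else 0| = 0
          rw [if_neg (Finset.mem_compl.mp hj), abs_zero]
      rw [p1, p2, add_zero]
    have e2 : l1 x = ∑ j ∈ Sᶜ, |cycVec G r u j| := by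
      unfold l1
      rw [← Finset.sum_add_sum_compl S]
      have p1 : ∑ j ∈ S, |x j| = 0 :=
        Finset.sum_eq_zero fun j hj => by
          show |(if j ∈ S then cycVec G r u j else 0) - cycVec G r u j| = 0
          rw [if_pos hj, sub_self, abs_zero]
      have p2 : ∑ j ∈ Sᶜ, |x j| = ∑ j ∈ Sᶜ, |cycVec G r u j| :=
        Finset.sum_congr rfl fun j hj => by
          show |(if j ∈ S then cycVec G r u j else 0) - cycVec G r u j| = _
          rw [if_neg (Finset.mem_compl.mp hj), zero_sub, abs_neg]
      rw [p1, p2, zero_add]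
    have hcS := sum_abs_cycVec_filter hc S
    have htot : ∑ j ∈ S, |cycVec G r u j| + ∑ j ∈ Sᶜ, |cycVec G r u j| = (r : ℝ) := by
      rw [Finset.sum_add_sum_compl]
      exact sum_abs_cycVec_total hc
    have hreal : 2 * (((S.filter (fun j => cycVec G r u j ≠ 0)).card : ℕ) : ℝ) < (r : ℝ) := by
      rw [e1, e2] at hlt
      linarith
    exact_mod_cast hreal
  · intro Hcyc xb hsupp x hAx hne
    set η : Fin n → ℝ := fun j => x j - xb j with hη
    have hηne : η ≠ 0 := by
      intro h
      apply hne
      funext j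
      exact sub_eq_zero.mp (congrFun h j)
    have h0 : (inc G).mulVec η = 0 := by
      have he : η = x - xb := rfl
      rw [he, Matrix.mulVec_sub, hAx, sub_self]
    have hnsp := nsp S Hcyc (Finset.univ.filter (fun j => η j ≠ 0)).card η le_rfl h0 hηne
    have hxbc : ∀ j ∈ Sᶜ, xb j = 0 := by
      intro j hj
      by_contra h
      exact (Finset.mem_compl.mp hj) (hsupp j h)
    have e1 : l1 xb = ∑ j ∈ S, |xb j| := by
      unfold l1
      rw [← Finset.sum_add_sum_compl S]
      have p2 : ∑ j ∈ Sᶜ, |xb j| = 0 :=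
        Finset.sum_eq_zero fun j hj => by rw [hxbc j hj, abs_zero]
      rw [p2, add_zero]
    have e2 : l1 x = ∑ j ∈ S, |x j| + ∑ j ∈ Sᶜ, |η j| := by
      unfold l1
      rw [← Finset.sum_add_sum_compl S]
      congr 1
      apply Finset.sum_congr rfl
      intro j hj
      show |x j| = |x j - xb j|
      rw [hxbc j hj, sub_zero]
    have e3 : ∀ j ∈ S, |xb j| - |η j| ≤ |x j| := by
      intro j _
      have hxj : x j = xb j + η j := by
        show x j = xb j + (x j - xb j)
        ring
      calc |xb j| - |η j| = |xb j| - |-(η j)| := by rw [abs_neg]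
        _ ≤ |xb j - -(η j)| := abs_sub_abs_le_abs_sub _ _
        _ = |xb j + η j| := by rw [sub_neg_eq_add]
        _ = |x j| := by rw [← hxj]
    have hsum : ∑ j ∈ S, (|xb j| - |η j|) ≤ ∑ j ∈ S, |x j| := Finset.sum_le_sum e3
    rw [Finset.sum_sub_distrib] at hsum
    rw [e1, e2]
    linarith [hnsp, hsum]
end

section
/- Let z be an extreme point of nullspace(A) ∩ B₁ where A is the incidence matrix of a simple connected directed graph, and let S = supp(z). Then the nullspace of the incidence matrix A_S of the induced subgraph G_S is one-dimensional and is spanned by z restricted to S. -/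
open Finset

lemma stmt19_sign_mul_self (x : ℝ) : Real.sign x * x = |x| := by
  rcases lt_trichotomy x 0 with h | h | h
  · rw [Real.sign_of_neg h, abs_of_neg h]; ring
  · simp [h]
  · rw [Real.sign_of_pos h, abs_of_pos h]; ring

lemma l1_smul {k : ℕ} (c : ℝ) (x : Fin k → ℝ) : l1 (c • x) = |c| * l1 x := by
  simp [l1, abs_mul, Finset.mul_sum]

lemma l1_pos {k : ℕ} {x : Fin k → ℝ} (hx : x ≠ 0) : 0 < l1 x := by
  obtain ⟨j, hj⟩ := Function.ne_iff.mp hx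
  have h1 : |x j| ≤ l1 x :=
    Finset.single_le_sum (f := fun i => |x i|) (fun i _ => abs_nonneg _) (Finset.mem_univ j)
  have h2 : 0 < |x j| := abs_pos.mpr hj
  linarith

lemma succ_mod_ne {r k : ℕ} (hr : 3 ≤ r) (hk : k < r) : (k + 1) % r ≠ k := by
  rcases Nat.lt_or_ge (k + 1) r with h | h
  · rw [Nat.mod_eq_of_lt h]; omega
  · have heq : k + 1 = r := by omega
    rw [heq, Nat.mod_self]; omega

lemma stmt19_inner_sum {m n : ℕ} (G : DiGraph m n) {r : ℕ} {u : ℕ → Fin m}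
    (hc : IsSimpleCycle G r u) (i : Fin m) {k : ℕ} (hk : k < r) :
    ∑ j : Fin n, inc G i j *
      ((if G.src j = u k ∧ G.tgt j = u ((k + 1) % r) then (1 : ℝ) else 0) -
       (if G.src j = u ((k + 1) % r) ∧ G.tgt j = u k then (1 : ℝ) else 0)) =
    (if u ((k + 1) % r) = i then (1 : ℝ) else 0) - (if u k = i then (1 : ℝ) else 0) := by
  obtain ⟨hr, hinj, hadj⟩ := hc
  have hrpos : 0 < r := by omega
  have hab : u k ≠ u ((k + 1) % r) := by
    intro h
    exact succ_mod_ne hr hk (hinj k hk ((k + 1) % r) (Nat.mod_lt _ hrpos) h).symm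
  obtain ⟨j₀, hj₀⟩ := hadj k hk
  have hj₀pair : ({G.src j₀, G.tgt j₀} : Finset (Fin m)) = {u k, u ((k + 1) % r)} := by
    rcases hj₀ with ⟨h1, h2⟩ | ⟨h1, h2⟩
    · rw [h1, h2]
    · rw [h1, h2]; exact Finset.pair_comm _ _
  have huniq : ∀ j : Fin n,
      ((G.src j = u k ∧ G.tgt j = u ((k + 1) % r)) ∨
       (G.src j = u ((k + 1) % r) ∧ G.tgt j = u k)) → j = j₀ := by
    intro j hj
    apply G.simple
    rw [hj₀pair]
    rcases hj with ⟨h1, h2⟩ | ⟨h1, h2⟩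
    · rw [h1, h2]
    · rw [h1, h2]; exact Finset.pair_comm _ _
  rw [Finset.sum_eq_single j₀]
  · rcases hj₀ with ⟨h1, h2⟩ | ⟨h1, h2⟩
    · have hP1 : G.src j₀ = u k ∧ G.tgt j₀ = u ((k + 1) % r) := ⟨h1, h2⟩
      have hP2 : ¬(G.src j₀ = u ((k + 1) % r) ∧ G.tgt j₀ = u k) :=
        fun hcon => hab (h1.symm.trans hcon.1)
      rw [if_pos hP1, if_neg hP2]
      show (if G.tgt j₀ = i then (1:ℝ) else if G.src j₀ = i then -1 else 0) * (1 - 0) = _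
      rw [h1, h2]
      split_ifs with ha hb
      · exact absurd ((hb).trans (ha).symm) hab
      · norm_num
      · norm_num
      · norm_num
    · have hP1 : ¬(G.src j₀ = u k ∧ G.tgt j₀ = u ((k + 1) % r)) :=
        fun hcon => hab (hcon.1.symm.trans h1)
      have hP2 : G.src j₀ = u ((k + 1) % r) ∧ G.tgt j₀ = u k := ⟨h1, h2⟩
      rw [if_neg hP1, if_pos hP2]
      show (if G.tgt j₀ = i then (1:ℝ) else if G.src j₀ = i then -1 else 0) * (0 - 1) = _
      rw [h1, h2]
      split_ifs with ha hb
      · exact absurd (ha.trans hb.symm) hab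
      · norm_num
      · norm_num
      · norm_num
  · intro j _ hj
    have hP1 : ¬(G.src j = u k ∧ G.tgt j = u ((k + 1) % r)) :=
      fun hcon => hj (huniq j (Or.inl hcon))
    have hP2 : ¬(G.src j = u ((k + 1) % r) ∧ G.tgt j = u k) :=
      fun hcon => hj (huniq j (Or.inr hcon))
    rw [if_neg hP1, if_neg hP2]
    ring
  · intro h
    exact absurd (Finset.mem_univ j₀) h

lemma cycVec_mulVec {m n : ℕ} (G : DiGraph m n) {r : ℕ} {u : ℕ → Fin m}
    (hc : IsSimpleCycle G r u) : (inc G).mulVec (cycVec G r u) = 0 := by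
  have hr3 := hc.1
  have hrpos : 0 < r := by omega
  funext i
  show ∑ j, inc G i j * cycVec G r u j = 0
  simp only [cycVec, Finset.mul_sum]
  rw [Finset.sum_comm]
  rw [Finset.sum_congr rfl (fun k hk => stmt19_inner_sum G hc i (Finset.mem_range.mp hk))]
  rw [Finset.sum_sub_distrib]
  have hbij : ∑ k ∈ Finset.range r, (if u ((k + 1) % r) = i then (1 : ℝ) else 0)
      = ∑ k ∈ Finset.range r, (if u k = i then (1 : ℝ) else 0) := by
    apply Finset.sum_nbij' (i := fun k => (k + 1) % r) (j := fun k => (k + (r - 1)) % r)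
    · intro a ha; exact Finset.mem_range.mpr (Nat.mod_lt _ hrpos)
    · intro a ha; exact Finset.mem_range.mpr (Nat.mod_lt _ hrpos)
    · intro a ha
      have hk := Finset.mem_range.mp ha
      rw [Nat.mod_add_mod]
      have h2 : a + 1 + (r - 1) = a + r := by omega
      rw [h2, Nat.add_mod_right, Nat.mod_eq_of_lt hk]
    · intro a ha
      have hk := Finset.mem_range.mp ha
      rw [Nat.mod_add_mod]
      have h2 : a + (r - 1) + 1 = a + r := by omega
      rw [h2, Nat.add_mod_right, Nat.mod_eq_of_lt hk]
    · intro a ha; rfl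
  rw [hbij, sub_self]

lemma cycVec_ne_zero {m n : ℕ} (G : DiGraph m n) {r : ℕ} {u : ℕ → Fin m}
    (hc : IsSimpleCycle G r u) : cycVec G r u ≠ 0 := by
  obtain ⟨hr, hinj, hadj⟩ := hc
  have hrpos : 0 < r := by omega
  obtain ⟨j₀, hj₀⟩ := hadj 0 hrpos
  have h1r : (0 + 1) % r = 1 := Nat.mod_eq_of_lt (by omega)
  rw [h1r] at hj₀
  have h2r : (1 + 1) % r = 2 := Nat.mod_eq_of_lt (by omega)
  have h01 : u 0 ≠ u 1 := by
    intro h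
    have := hinj 0 hrpos 1 (by omega) h
    omega
  intro h0
  have hval := congrFun h0 j₀
  rw [cycVec] at hval
  rw [Finset.sum_eq_single 0 ?other ?notmem] at hval
  case other =>
    intro k hkmem hkne
    have hk := Finset.mem_range.mp hkmem
    rcases hj₀ with ⟨h1, h2⟩ | ⟨h1, h2⟩
    · have hP1 : ¬(G.src j₀ = u k ∧ G.tgt j₀ = u ((k + 1) % r)) := by
        rintro ⟨ha, hb⟩
        exact hkne (hinj k hk 0 hrpos (ha.symm.trans h1))
      have hP2 : ¬(G.src j₀ = u ((k + 1) % r) ∧ G.tgt j₀ = u k) := by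
        rintro ⟨ha, hb⟩
        have e1 : (k + 1) % r = 0 :=
          hinj ((k+1) % r) (Nat.mod_lt _ hrpos) 0 hrpos (ha.symm.trans h1)
        have e2 : k = 1 := hinj k hk 1 (by omega) (hb.symm.trans h2)
        rw [e2, h2r] at e1
        omega
      rw [if_neg hP1, if_neg hP2]
      ring
    · have hP1 : ¬(G.src j₀ = u k ∧ G.tgt j₀ = u ((k + 1) % r)) := by
        rintro ⟨ha, hb⟩
        have e2 : k = 1 := hinj k hk 1 (by omega) (ha.symm.trans h1)
        have e1 : (k + 1) % r = 0 :=
          hinj ((k+1) % r) (Nat.mod_lt _ hrpos) 0 hrpos (hb.symm.trans h2)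
        rw [e2, h2r] at e1
        omega
      have hP2 : ¬(G.src j₀ = u ((k + 1) % r) ∧ G.tgt j₀ = u k) := by
        rintro ⟨ha, hb⟩
        exact hkne (hinj k hk 0 hrpos (hb.symm.trans h2))
      rw [if_neg hP1, if_neg hP2]
      ring
  case notmem =>
    intro h
    exact absurd (Finset.mem_range.mpr hrpos) h
  rw [h1r] at hval
  rcases hj₀ with ⟨h1, h2⟩ | ⟨h1, h2⟩
  · have hP1 : G.src j₀ = u 0 ∧ G.tgt j₀ = u 1 := ⟨h1, h2⟩
    have hP2 : ¬(G.src j₀ = u 1 ∧ G.tgt j₀ = u 0) :=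
      fun hcon => h01 (h1.symm.trans hcon.1)
    rw [if_pos hP1, if_neg hP2] at hval
    norm_num at hval
  · have hP1 : ¬(G.src j₀ = u 0 ∧ G.tgt j₀ = u 1) :=
      fun hcon => h01 (hcon.1.symm.trans h1)
    have hP2 : G.src j₀ = u 1 ∧ G.tgt j₀ = u 0 := ⟨h1, h2⟩
    rw [if_neg hP1, if_pos hP2] at hval
    norm_num at hval
theorem stmt19 {m n : ℕ} (G : DiGraph m n) (hconn : (toSG G).Connected)
    (hcyc : ∃ r u, IsSimpleCycle G r u) (z : Fin n → ℝ)
    (hz : z ∈ Set.extremePoints ℝ {x : Fin n → ℝ | (inc G).mulVec x = 0 ∧ l1 x ≤ 1}) :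
    LinearMap.ker ((inc G).submatrix id
        (fun j : {j : Fin n // z j ≠ 0} => (j : Fin n))).mulVecLin =
      Submodule.span ℝ {fun j : {j : Fin n // z j ≠ 0} => z j} ∧
    Module.finrank ℝ (LinearMap.ker ((inc G).submatrix id
        (fun j : {j : Fin n // z j ≠ 0} => (j : Fin n))).mulVecLin) = 1 := by
  obtain ⟨hzmem, hext⟩ := hz
  obtain ⟨hAz, hl1z⟩ := hzmem
  -- key extremality consequence
  have key : ∀ v : Fin n → ℝ, (inc G).mulVec v = 0 → (∀ j, z j = 0 → v j = 0) →
      (∑ j, Real.sign (z j) * v j = 0) → v = 0 := by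
    intro v hAv hsupp hsgn
    have hex : ∃ ε : ℝ, 0 < ε ∧ ∀ j, z j ≠ 0 → ε * |v j| < |z j| := by
      obtain h | h := isEmpty_or_nonempty (Fin n)
      · exact ⟨1, one_pos, fun j => (h.false j).elim⟩
      · refine ⟨Finset.univ.inf' Finset.univ_nonempty
          (fun j => if z j = 0 then 1 else |z j| / (2 * (|v j| + 1))), ?_, ?_⟩
        · rw [Finset.lt_inf'_iff]
          intro j _
          split_ifs with h0
          · norm_num
          · exact div_pos (abs_pos.mpr h0) (by positivity)
        · intro j hj
          have hle : Finset.univ.inf' Finset.univ_nonempty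
              (fun j => if z j = 0 then 1 else |z j| / (2 * (|v j| + 1)))
              ≤ |z j| / (2 * (|v j| + 1)) := by
            have := Finset.inf'_le (fun j => if z j = 0 then (1:ℝ) else |z j| / (2 * (|v j| + 1)))
              (Finset.mem_univ j)
            rwa [if_neg hj] at this
          set ε := Finset.univ.inf' Finset.univ_nonempty
              (fun j => if z j = 0 then (1:ℝ) else |z j| / (2 * (|v j| + 1)))
          have hεpos : 0 < ε := by
            rw [Finset.lt_inf'_iff]
            intro j _
            split_ifs with h0
            · norm_num
            · exact div_pos (abs_pos.mpr h0) (by positivity)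
          have h2pos : (0:ℝ) < 2 * (|v j| + 1) := by positivity
          have hmul : ε * (2 * (|v j| + 1)) ≤ |z j| := (le_div_iff₀ h2pos).mp hle
          nlinarith [abs_nonneg (v j), abs_pos.mpr hj, mul_nonneg hεpos.le (abs_nonneg (v j))]
    obtain ⟨ε, hε, hεlt⟩ := hex
    have habs : ∀ w : Fin n → ℝ, (∀ j, z j = 0 → w j = 0) →
        (∀ j, z j ≠ 0 → ε * |w j| < |z j|) →
        l1 (z + ε • w) = l1 z + ε * ∑ j, Real.sign (z j) * w j := by
      intro w hwsupp hwlt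
      have hterm : ∀ j : Fin n, |z j + ε * w j| = |z j| + ε * (Real.sign (z j) * w j) := by
        intro j
        by_cases h0 : z j = 0
        · rw [h0, hwsupp j h0]
          simp
        · have hlt := hwlt j h0
          rcases lt_or_gt_of_ne h0 with hneg | hpos
          · have h1 : z j + ε * w j < 0 := by
              have : ε * w j ≤ ε * |w j| := by
                have := le_abs_self (w j)
                nlinarith
              rw [abs_of_neg hneg] at hlt
              linarith
            rw [abs_of_neg h1, abs_of_neg hneg, Real.sign_of_neg hneg]
            ring
          · have h1 : 0 < z j + ε * w j := by
              have : -(ε * |w j|) ≤ ε * w j := by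
                have := neg_abs_le (w j)
                nlinarith
              rw [abs_of_pos hpos] at hlt
              linarith
            rw [abs_of_pos h1, abs_of_pos hpos, Real.sign_of_pos hpos]
            ring
      have : l1 (z + ε • w) = ∑ j, (|z j| + ε * (Real.sign (z j) * w j)) := by
        rw [l1]
        exact Finset.sum_congr rfl (fun j _ => hterm j)
      rw [this, Finset.sum_add_distrib, ← Finset.mul_sum, l1]
    have hAmem : ∀ w : Fin n → ℝ, (inc G).mulVec w = 0 →
        (inc G).mulVec (z + ε • w) = 0 := by
      intro w hw
      rw [Matrix.mulVec_add, Matrix.mulVec_smul, hAz, hw]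
      simp
    have hsgn' : ∑ j, Real.sign (z j) * (-v) j = 0 := by
      simp only [Pi.neg_apply, mul_neg, Finset.sum_neg_distrib, hsgn, neg_zero]
    have hmem₁ : z + ε • v ∈ {x : Fin n → ℝ | (inc G).mulVec x = 0 ∧ l1 x ≤ 1} := by
      refine ⟨hAmem v hAv, ?_⟩
      rw [habs v hsupp hεlt, hsgn]
      simpa using hl1z
    have hmem₂ : z + ε • (-v) ∈ {x : Fin n → ℝ | (inc G).mulVec x = 0 ∧ l1 x ≤ 1} := by
      refine ⟨hAmem (-v) (by rw [Matrix.mulVec_neg, hAv, neg_zero]), ?_⟩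
      rw [habs (-v) (fun j hj => by rw [Pi.neg_apply, hsupp j hj, neg_zero])
        (fun j hj => by rw [Pi.neg_apply, abs_neg]; exact hεlt j hj), hsgn']
      simpa using hl1z
    have hseg : z ∈ openSegment ℝ (z + ε • v) (z + ε • (-v)) := by
      refine ⟨1/2, 1/2, one_half_pos, one_half_pos, by norm_num, ?_⟩
      module
    have heq := hext hmem₁ hmem₂ hseg
    funext j
    have := congrFun heq j
    simp only [Pi.add_apply, Pi.smul_apply, smul_eq_mul] at this
    have hvj : ε * v j = 0 := by linarith
    have := mul_eq_zero.mp hvj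
    rcases this with h | h
    · exact absurd h hε.ne'
    · simpa using h
  -- z is nonzero
  have hzne : z ≠ 0 := by
    intro hz0
    obtain ⟨r, u, hc⟩ := hcyc
    have hw := cycVec_ne_zero G hc
    have hAw := cycVec_mulVec G hc
    set w := cycVec G r u with hwdef
    have hL : 0 < l1 w := l1_pos hw
    have hmemK : ∀ c : ℝ, |c| * l1 w ≤ 1 → c • w ∈
        {x : Fin n → ℝ | (inc G).mulVec x = 0 ∧ l1 x ≤ 1} := by
      intro c hc1
      refine ⟨?_, ?_⟩
      · rw [Matrix.mulVec_smul, hAw]; simp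
      · rw [l1_smul]; exact hc1
    have hm1 : ((l1 w)⁻¹ : ℝ) • w ∈ {x : Fin n → ℝ | (inc G).mulVec x = 0 ∧ l1 x ≤ 1} := by
      apply hmemK
      rw [abs_of_pos (inv_pos.mpr hL), inv_mul_cancel₀ hL.ne']
    have hm2 : (-(l1 w)⁻¹ : ℝ) • w ∈ {x : Fin n → ℝ | (inc G).mulVec x = 0 ∧ l1 x ≤ 1} := by
      apply hmemK
      rw [abs_neg, abs_of_pos (inv_pos.mpr hL), inv_mul_cancel₀ hL.ne']
    have hseg : z ∈ openSegment ℝ (((l1 w)⁻¹ : ℝ) • w) ((-(l1 w)⁻¹ : ℝ) • w) := by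
      refine ⟨1/2, 1/2, one_half_pos, one_half_pos, by norm_num, ?_⟩
      rw [hz0]
      module
    have heq := hext hm1 hm2 hseg
    rw [hz0] at heq
    have : w = 0 := by
      have := congrArg (fun x => (l1 w : ℝ) • x) heq
      simpa [smul_smul, mul_inv_cancel₀ hL.ne'] using this
    exact hw this
  -- sum over subtype
  have hsum_sub : ∀ f : Fin n → ℝ, (∀ j, z j = 0 → f j = 0) →
      ∑ j : {j : Fin n // z j ≠ 0}, f j = ∑ j, f j := by
    intro f hf
    rw [← Finset.sum_subtype (Finset.univ.filter (fun j => z j ≠ 0))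
      (by intro x; simp) f]
    exact Finset.sum_filter_of_ne (fun x _ hx => fun h0 => hx (hf x h0))
  have hL : 0 < l1 z := l1_pos hzne
  have hsignz : ∑ j, Real.sign (z j) * z j = l1 z := by
    rw [l1]
    exact Finset.sum_congr rfl (fun j _ => stmt19_sign_mul_self (z j))
  -- z restricted to support is in the kernel
  have hkerz : ((inc G).submatrix id
      (fun j : {j : Fin n // z j ≠ 0} => (j : Fin n))).mulVecLin
      (fun j : {j : Fin n // z j ≠ 0} => z j) = 0 := by
    funext i
    show ∑ j : {j : Fin n // z j ≠ 0}, inc G i (↑j) * z ↑j = 0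
    rw [hsum_sub (fun j => inc G i j * z j) (fun j h => by simp [h])]
    exact congrFun hAz i
  have hzS_ne : (fun j : {j : Fin n // z j ≠ 0} => z j) ≠ 0 := by
    obtain ⟨j, hj⟩ := Function.ne_iff.mp hzne
    intro h
    exact hj (congrFun h ⟨j, hj⟩)
  have hker_eq : LinearMap.ker ((inc G).submatrix id
      (fun j : {j : Fin n // z j ≠ 0} => (j : Fin n))).mulVecLin =
      Submodule.span ℝ {fun j : {j : Fin n // z j ≠ 0} => z j} := by
    apply le_antisymm
    · intro y hy
      rw [LinearMap.mem_ker] at hy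
      set yt : Fin n → ℝ := fun j => if h : z j ≠ 0 then y ⟨j, h⟩ else 0 with hydef
      have hysupp : ∀ j, z j = 0 → yt j = 0 := by
        intro j hj
        rw [hydef]
        exact dif_neg (fun h => h hj)
      have hyval : ∀ j : {j : Fin n // z j ≠ 0}, yt ↑j = y j := by
        intro j
        rw [hydef]
        simp only
        rw [dif_pos j.2]
      have hAy : (inc G).mulVec yt = 0 := by
        funext i
        show ∑ j, inc G i j * yt j = 0
        rw [← hsum_sub (fun j => inc G i j * yt j) (fun j h => by simp [hysupp j h])]
        rw [Finset.sum_congr rfl (fun j _ => by rw [hyval j])]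
        exact congrFun hy i
      set c : ℝ := ∑ j, Real.sign (z j) * yt j with hcdef
      have hv0 : yt - (c / l1 z) • z = 0 := by
        apply key
        · rw [Matrix.mulVec_sub, Matrix.mulVec_smul, hAy, hAz]
          simp
        · intro j hj
          simp only [Pi.sub_apply, Pi.smul_apply, smul_eq_mul]
          rw [hysupp j hj, hj, mul_zero, sub_zero]
        · have : ∀ j : Fin n, Real.sign (z j) * (yt - (c / l1 z) • z) j =
              Real.sign (z j) * yt j - (c / l1 z) * (Real.sign (z j) * z j) := by
            intro j
            simp only [Pi.sub_apply, Pi.smul_apply, smul_eq_mul]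
            ring
          rw [Finset.sum_congr rfl (fun j _ => this j), Finset.sum_sub_distrib,
            ← Finset.mul_sum, hsignz, ← hcdef]
          field_simp
          ring
      have hy_eq : yt = (c / l1 z) • z := by
        have := sub_eq_zero.mp hv0
        exact this
      rw [Submodule.mem_span_singleton]
      refine ⟨c / l1 z, ?_⟩
      funext j
      have h1 := hyval j
      have h2 := congrFun hy_eq ↑j
      simp only [Pi.smul_apply, smul_eq_mul] at h2 ⊢
      rw [← h1, h2]
    · rw [Submodule.span_singleton_le_iff_mem]
      exact LinearMap.mem_ker.mpr hkerz
  refine ⟨hker_eq, ?_⟩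
  rw [hker_eq]
  exact finrank_span_singleton hzS_ne
end
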